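/- arXiv:2505.11605 — 11 statements merged into one kernel-verified Lean document; each statement's English description precedes it below -/
import Mathlib

section
/- A noncrossing perfect matching of {1, ..., 2n} is uniquely determined by its set of left endpoints: if C1 and C2 are noncrossing perfect matchings of {1,...,2n} whose sets of left endpoints coincide, then C1 = C2. -/
/-- `C` is a perfect matching of `{1, ..., 2n}`: a finite set of pairs `(i, j)` with
`1 ≤ i < j ≤ 2n` such that every `k ∈ {1, ..., 2n}` is an endpoint of exactly one pair. -/
def IsMatching (n : ℕ) (C : Finset (ℕ × ℕ)) : Prop :=
  (∀ p ∈ C, 1 ≤ p.1 ∧ p.1 < p.2 ∧ p.2 ≤ 2 * n) ∧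
  ∀ k, 1 ≤ k → k ≤ 2 * n → ∃! p, p ∈ C ∧ (p.1 = k ∨ p.2 = k)

/-- Two pairs `(i₁, j₁)` and `(i₂, j₂)` cross if `i₁ < i₂ < j₁ < j₂` or `i₂ < i₁ < j₂ < j₁`. -/
def Crossing (p q : ℕ × ℕ) : Prop :=
  (p.1 < q.1 ∧ q.1 < p.2 ∧ p.2 < q.2) ∨ (q.1 < p.1 ∧ p.1 < q.2 ∧ q.2 < p.2)

/-- A noncrossing perfect matching of `{1, ..., 2n}`. -/
def IsNoncrossingMatching (n : ℕ) (C : Finset (ℕ × ℕ)) : Prop :=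
  IsMatching n C ∧ ∀ p ∈ C, ∀ q ∈ C, ¬ Crossing p q

lemma eq_of_shared {n : ℕ} {C : Finset (ℕ × ℕ)} (hC : IsMatching n C)
    {p q : ℕ × ℕ} (hp : p ∈ C) (hq : q ∈ C) {m : ℕ}
    (h1 : p.1 = m ∨ p.2 = m) (h2 : q.1 = m ∨ q.2 = m) : p = q := by
  obtain ⟨hb1, hb2, hb3⟩ := hC.1 p hp
  have hm1 : 1 ≤ m := by rcases h1 with h | h <;> omega
  have hm2 : m ≤ 2 * n := by rcases h1 with h | h <;> omega
  exact (hC.2 m hm1 hm2).unique ⟨hp, h1⟩ ⟨hq, h2⟩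

lemma nest {n : ℕ} {C : Finset (ℕ × ℕ)} (hC : IsNoncrossingMatching n C)
    {i j k : ℕ} (hij : (i, j) ∈ C) {p : ℕ × ℕ} (hp : p ∈ C)
    (hik : i < k) (hkj : k < j) (hpk : p.1 = k ∨ p.2 = k) :
    i < p.1 ∧ p.2 < j := by
  have hne : p ≠ (i, j) := by
    rintro rfl; simp at hpk; omega
  have hcr := hC.2 _ hij p hp
  obtain ⟨_, hlt, _⟩ := hC.1.1 p hp
  -- endpoints of p differ from i and j
  have hi : p.1 ≠ i ∧ p.2 ≠ i := by
    constructor <;> intro he <;>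
      exact hne (eq_of_shared hC.1 hp hij (by omega) (Or.inl rfl))
  have hj : p.1 ≠ j ∧ p.2 ≠ j := by
    constructor <;> intro he <;>
      exact hne (eq_of_shared hC.1 hp hij (by omega) (Or.inr rfl))
  unfold Crossing at hcr
  simp only [not_or, not_and] at hcr
  rcases hpk with h | h <;>
  · constructor <;> by_contra hc <;> [skip; skip] <;> omega

lemma key {n : ℕ} {C1 C2 : Finset (ℕ × ℕ)}
    (h1 : IsNoncrossingMatching n C1) (h2 : IsNoncrossingMatching n C2)
    (h : C1.image Prod.fst = C2.image Prod.fst) :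
    ∀ d : ℕ, ∀ p ∈ C1, p.2 - p.1 ≤ d → p ∈ C2 := by
  intro d
  induction d with
  | zero =>
    intro p hp hd
    obtain ⟨_, hlt, _⟩ := h1.1.1 p hp
    omega
  | succ d ih =>
    intro p hp hd
    obtain ⟨i, j⟩ := p
    obtain ⟨hb1, hb2, hb3⟩ := h1.1.1 _ hp
    simp only at hb1 hb2 hb3 hd ⊢
    -- Step A: every k strictly inside (i,j): its C1-pair lies in C2
    have stepA : ∀ k, i < k → k < j → ∃ q ∈ C2, (q.1 = k ∨ q.2 = k) ∧ i < q.1 ∧ q.2 < j := by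
      intro k hik hkj
      obtain ⟨q, ⟨hq, hqk⟩, _⟩ := h1.1.2 k (by omega) (by omega)
      obtain ⟨hn1, hn2⟩ := nest h1 hp hq hik hkj hqk
      obtain ⟨_, hqlt, _⟩ := h1.1.1 q hq
      exact ⟨q, ih q hq (by omega), hqk, hn1, hn2⟩
    -- i is a left endpoint of C2
    have hiLE : i ∈ C2.image Prod.fst := by
      rw [← h]; exact Finset.mem_image_of_mem _ hp
    obtain ⟨q0, hq0, hq0i⟩ := Finset.mem_image.mp hiLE
    obtain ⟨_, hlt', hle'⟩ := h2.1.1 _ hq0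
    -- show q0.2 = j
    rcases lt_trichotomy q0.2 j with hc | hc | hc
    · -- q0.2 < j : q0.2 is inside (i,j), its C1-pair is in C2 and has fst > i
      exfalso
      obtain ⟨q, hqC2, hqk, hn1, _⟩ := stepA q0.2 (by omega) hc
      have := eq_of_shared h2.1 hqC2 hq0 hqk (Or.inr rfl)
      subst this; omega
    · have : q0 = (i, j) := by
        obtain ⟨a, b⟩ := q0; simp only at hq0i hc; subst hq0i; subst hc; rfl
      rwa [← this]
    · -- j' > j : find the C2-pair containing j
      exfalso
      -- j is not a left endpoint of C1 (hence not of C2)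
      have hjL : j ∉ C2.image Prod.fst := by
        rw [← h]
        intro hmem
        obtain ⟨r, hr, hrj⟩ := Finset.mem_image.mp hmem
        have := eq_of_shared h1.1 hr hp (Or.inl hrj) (Or.inr rfl)
        subst this; simp at hrj; omega
      obtain ⟨q, ⟨hqC2, hqj⟩, _⟩ := h2.1.2 j (by omega) (by omega)
      have hq1 : q.2 = j := by
        rcases hqj with hh | hh
        · exact absurd (Finset.mem_image.mpr ⟨q, hqC2, hh⟩) hjL
        · exact hh
      obtain ⟨_, hqlt, _⟩ := h2.1.1 q hqC2
      -- q.1 ≠ i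
      have hq1i : q.1 ≠ i := by
        intro he
        have := eq_of_shared h2.1 hqC2 hq0 (Or.inl he) (Or.inl hq0i)
        subst this; omega
      -- q.1 not in (i,j)
      have hq1lt : q.1 < i := by
        by_contra hcon
        have hik : i < q.1 := by omega
        have hkj : q.1 < j := by omega
        obtain ⟨r, hrC2, hrk, _, hr2⟩ := stepA q.1 hik hkj
        have := eq_of_shared h2.1 hrC2 hqC2 hrk (Or.inl rfl)
        subst this; omega
      -- crossing q (i, j')
      exact h2.2 q hqC2 _ hq0 (Or.inl (by omega))

/-- A noncrossing perfect matching of `{1, ..., 2n}` is uniquely determined by its set of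
left endpoints. -/
theorem noncrossing_matching_left_ends_unique (n : ℕ) (C1 C2 : Finset (ℕ × ℕ))
    (h1 : IsNoncrossingMatching n C1) (h2 : IsNoncrossingMatching n C2)
    (h : C1.image Prod.fst = C2.image Prod.fst) : C1 = C2 := by
  apply Finset.Subset.antisymm
  · intro p hp; exact key h1 h2 h (p.2 - p.1) p hp le_rfl
  · intro p hp; exact key h2 h1 h.symm (p.2 - p.1) p hp le_rfl
end

section
/- Let w = (a_1, ..., a_{2n}) be a finite sequence of integers and suppose w admits an arc configuration. Then for every integer b, the number of arcs of color b (i.e. pairs (i,j) in the configuration with a_i = b-1 and a_j = b+1) is the same in every arc configuration of w, and equals both Σ_{j≥0} (-1)^j · #{k : a_k = b-1-2j} and Σ_{j≥0} (-1)^j · #{k : a_k = b+1+2j}. -/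
/-- `C` is an arc configuration of the word `w = (w 1, ..., w (2n))`: a finite set of pairs
`(i, j)` with `1 ≤ i < j ≤ 2n` and `w j = w i + 2`, whose endpoints partition `{1, ..., 2n}`. -/
def IsArcConfig (n : ℕ) (w : ℕ → ℤ) (C : Finset (ℕ × ℕ)) : Prop :=
  (∀ p ∈ C, 1 ≤ p.1 ∧ p.1 < p.2 ∧ p.2 ≤ 2 * n ∧ w p.2 = w p.1 + 2) ∧
  ∀ k, 1 ≤ k → k ≤ 2 * n → ∃! p, p ∈ C ∧ (p.1 = k ∨ p.2 = k)

/-- The number of positions `k ∈ {1, ..., 2n}` with `w k = b`. -/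
def letterCount (n : ℕ) (w : ℕ → ℤ) (b : ℤ) : ℕ :=
  ((Finset.Icc 1 (2 * n)).filter fun k => w k = b).card

/-- Number of arcs of `C` whose left endpoint sits at level `c` (as an integer). -/
noncomputable def arcLC (w : ℕ → ℤ) (C : Finset (ℕ × ℕ)) (c : ℤ) : ℤ :=
  ((C.filter fun p => w p.1 = c).card : ℤ)

lemma arcLC_nonneg (w : ℕ → ℤ) (C : Finset (ℕ × ℕ)) (c : ℤ) : 0 ≤ arcLC w C c :=
  Int.natCast_nonneg _

lemma key_s4 {n : ℕ} {w : ℕ → ℤ} {C : Finset (ℕ × ℕ)} (h : IsArcConfig n w C) (b : ℤ) :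
    (letterCount n w b : ℤ) = arcLC w C b + arcLC w C (b - 2) := by
  classical
  obtain ⟨harc, huniq⟩ := h
  set K := (Finset.Icc 1 (2 * n)).filter (fun k => w k = b) with hK
  have hsplit : (K.filter (fun k => ∃ p ∈ C, p.1 = k)).card
      + (K.filter (fun k => ¬ ∃ p ∈ C, p.1 = k)).card = K.card :=
    Finset.card_filter_add_card_filter_not _
  have hL : (C.filter fun p => w p.1 = b).card
      = (K.filter (fun k => ∃ p ∈ C, p.1 = k)).card := by
    apply Finset.card_bij (fun p _ => p.1)
    · intro p hp
      simp only [Finset.mem_filter] at hp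
      obtain ⟨hpC, hw⟩ := hp
      obtain ⟨ha1, ha2, ha3, _⟩ := harc p hpC
      simp only [hK, Finset.mem_filter, Finset.mem_Icc]
      exact ⟨⟨⟨ha1, by omega⟩, hw⟩, p, hpC, rfl⟩
    · intro p hp q hq hpq
      simp only [Finset.mem_filter] at hp hq
      obtain ⟨ha1, ha2, ha3, _⟩ := harc p hp.1
      exact (huniq p.1 ha1 (by omega)).unique ⟨hp.1, Or.inl rfl⟩ ⟨hq.1, Or.inl hpq.symm⟩
    · intro k hk
      simp only [hK, Finset.mem_filter] at hk
      obtain ⟨⟨_, hkw⟩, p, hpC, hp1⟩ := hk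
      exact ⟨p, Finset.mem_filter.mpr ⟨hpC, hp1 ▸ hkw⟩, hp1⟩
  have hR : (C.filter fun p => w p.1 = b - 2).card
      = (K.filter (fun k => ¬ ∃ p ∈ C, p.1 = k)).card := by
    apply Finset.card_bij (fun p _ => p.2)
    · intro p hp
      simp only [Finset.mem_filter] at hp
      obtain ⟨hpC, hw⟩ := hp
      obtain ⟨ha1, ha2, ha3, ha4⟩ := harc p hpC
      simp only [hK, Finset.mem_filter, Finset.mem_Icc]
      refine ⟨⟨⟨by omega, ha3⟩, by rw [ha4, hw]; ring⟩, ?_⟩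
      rintro ⟨q, hqC, hq1⟩
      have hpq := (huniq p.2 (by omega) ha3).unique ⟨hpC, Or.inr rfl⟩ ⟨hqC, Or.inl hq1⟩
      obtain ⟨hb1, hb2, _, _⟩ := harc q hqC
      have e1 : p.1 = q.1 := by rw [hpq]
      have e2 : p.2 = q.2 := by rw [hpq]
      omega
    · intro p hp q hq hpq
      simp only [Finset.mem_filter] at hp hq
      obtain ⟨ha1, ha2, ha3, _⟩ := harc p hp.1
      exact (huniq p.2 (by omega) ha3).unique ⟨hp.1, Or.inr rfl⟩ ⟨hq.1, Or.inr hpq.symm⟩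
    · intro k hk
      simp only [hK, Finset.mem_filter, Finset.mem_Icc] at hk
      obtain ⟨⟨⟨hk1, hk2⟩, hkw⟩, hnot⟩ := hk
      obtain ⟨p, ⟨hpC, hp⟩, _⟩ := huniq k hk1 hk2
      obtain ⟨_, _, _, ha4⟩ := harc p hpC
      rcases hp with hp | hp
      · exact absurd ⟨p, hpC, hp⟩ hnot
      · refine ⟨p, Finset.mem_filter.mpr ⟨hpC, ?_⟩, hp⟩
        have : w p.2 = b := hp ▸ hkw
        omega
  have hcard : (letterCount n w b : ℤ) = (K.card : ℤ) := rfl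
  rw [hcard, ← hsplit, ← hL, ← hR, arcLC, arcLC]
  push_cast
  ring

lemma down {n : ℕ} {w : ℕ → ℤ} {C : Finset (ℕ × ℕ)} (h : IsArcConfig n w C) (b : ℤ)
    (m : ℕ) :
    arcLC w C (b - 1)
      = ∑ j ∈ Finset.range m, (-1) ^ j * (letterCount n w (b - 1 - 2 * (j : ℤ)) : ℤ)
        + (-1) ^ m * arcLC w C (b - 1 - 2 * (m : ℤ)) := by
  induction m with
  | zero => simp
  | succ m ih =>
    rw [Finset.sum_range_succ, ih]
    have hk := key_s4 h (b - 1 - 2 * (m : ℤ))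
    have he : arcLC w C (b - 1 - 2 * ((m : ℤ) + 1)) = arcLC w C (b - 1 - 2 * (m : ℤ) - 2) := by
      ring_nf
    push_cast
    rw [he]
    have : arcLC w C (b - 1 - 2 * (m : ℤ))
        = (letterCount n w (b - 1 - 2 * (m : ℤ)) : ℤ) - arcLC w C (b - 1 - 2 * (m : ℤ) - 2) := by
      omega
    rw [this]
    ring

lemma up {n : ℕ} {w : ℕ → ℤ} {C : Finset (ℕ × ℕ)} (h : IsArcConfig n w C) (b : ℤ)
    (m : ℕ) :
    arcLC w C (b - 1)
      = ∑ j ∈ Finset.range m, (-1) ^ j * (letterCount n w (b + 1 + 2 * (j : ℤ)) : ℤ)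
        + (-1) ^ m * arcLC w C (b - 1 + 2 * (m : ℤ)) := by
  induction m with
  | zero => simp
  | succ m ih =>
    rw [Finset.sum_range_succ, ih]
    have hk := key_s4 h (b + 1 + 2 * (m : ℤ))
    have h1 : arcLC w C (b + 1 + 2 * (m : ℤ) - 2) = arcLC w C (b - 1 + 2 * (m : ℤ)) := by
      ring_nf
    have h2 : arcLC w C (b - 1 + 2 * ((m : ℤ) + 1)) = arcLC w C (b + 1 + 2 * (m : ℤ)) := by
      ring_nf
    push_cast
    rw [h2]
    rw [h1] at hk
    have : arcLC w C (b - 1 + 2 * (m : ℤ))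
        = (letterCount n w (b + 1 + 2 * (m : ℤ)) : ℤ) - arcLC w C (b + 1 + 2 * (m : ℤ)) := by
      omega
    rw [this]
    ring

lemma formula {n : ℕ} {w : ℕ → ℤ} {C : Finset (ℕ × ℕ)} (h : IsArcConfig n w C) (b : ℤ)
    (M : ℕ)
    (hM : ∀ j : ℕ, M ≤ j →
      letterCount n w (b - 1 - 2 * (j : ℤ)) = 0 ∧ letterCount n w (b + 1 + 2 * (j : ℤ)) = 0) :
    arcLC w C (b - 1)
      = ∑ j ∈ Finset.range M, (-1) ^ j * (letterCount n w (b - 1 - 2 * (j : ℤ)) : ℤ) ∧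
    arcLC w C (b - 1)
      = ∑ j ∈ Finset.range M, (-1) ^ j * (letterCount n w (b + 1 + 2 * (j : ℤ)) : ℤ) := by
  obtain ⟨hMd, hMu⟩ := hM M le_rfl
  constructor
  · have hd := down h b M
    -- arcLC w C (b - 1 - 2M) = 0 : its left endpoints would be letters at b-1-2M
    have hz : arcLC w C (b - 1 - 2 * (M : ℤ)) = 0 := by
      have hk := key_s4 h (b - 2 * (M : ℤ))
      have he : (b : ℤ) - 2 * M - 2 = b - 1 - 2 * M - 1 := by ring
      have hk2 := key_s4 h (b - 1 - 2 * (M : ℤ))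
      have := arcLC_nonneg w C (b - 1 - 2 * (M : ℤ))
      have := arcLC_nonneg w C (b - 1 - 2 * (M : ℤ) - 2)
      rw [hMd] at hk2
      push_cast at hk2
      omega
    rw [hd, hz, mul_zero, add_zero]
  · have hu := up h b M
    have hz : arcLC w C (b - 1 + 2 * (M : ℤ)) = 0 := by
      -- right endpoints of such arcs are letters at b+1+2M, and count there is 0
      have hk := key_s4 h (b + 1 + 2 * (M : ℤ))
      have he : arcLC w C (b + 1 + 2 * (M : ℤ) - 2) = arcLC w C (b - 1 + 2 * (M : ℤ)) := by
        ring_nf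
      rw [he, hMu] at hk
      have := arcLC_nonneg w C (b + 1 + 2 * (M : ℤ))
      have := arcLC_nonneg w C (b - 1 + 2 * (M : ℤ))
      push_cast at hk
      omega
    rw [hu, hz, mul_zero, add_zero]

/-- If a word admits an arc configuration, then for every `b` the number of arcs of color `b`
(arcs `(i,j)` with `w i = b - 1`, `w j = b + 1`) is the same in every arc configuration, and
equals both alternating sums `Σ_{j≥0} (-1)^j #{k : w k = b-1-2j}` and
`Σ_{j≥0} (-1)^j #{k : w k = b+1+2j}` (truncated at any `M` beyond which all counts vanish). -/
theorem arcConfig_color_count (n : ℕ) (w : ℕ → ℤ) (C1 C2 : Finset (ℕ × ℕ))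
    (h1 : IsArcConfig n w C1) (h2 : IsArcConfig n w C2) (b : ℤ) (M : ℕ)
    (hM : ∀ j : ℕ, M ≤ j →
      letterCount n w (b - 1 - 2 * (j : ℤ)) = 0 ∧ letterCount n w (b + 1 + 2 * (j : ℤ)) = 0) :
    (C1.filter fun p => w p.1 = b - 1).card = (C2.filter fun p => w p.1 = b - 1).card ∧
    ((C1.filter fun p => w p.1 = b - 1).card : ℤ)
      = ∑ j ∈ Finset.range M, (-1) ^ j * (letterCount n w (b - 1 - 2 * (j : ℤ)) : ℤ) ∧
    ((C1.filter fun p => w p.1 = b - 1).card : ℤ)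
      = ∑ j ∈ Finset.range M, (-1) ^ j * (letterCount n w (b + 1 + 2 * (j : ℤ)) : ℤ) := by
  obtain ⟨hf1, hf1'⟩ := formula h1 b M hM
  obtain ⟨hf2, _⟩ := formula h2 b M hM
  refine ⟨?_, hf1, hf1'⟩
  have : arcLC w C1 (b - 1) = arcLC w C2 (b - 1) := hf1.trans hf2.symm
  simpa [arcLC, Nat.cast_inj] using this
end

section
/- Let w = (a_1, ..., a_{2n}) be a sequence of integers admitting at least one arc configuration. Let a be the minimal letter of w, let i be the largest index with a_i = a, and let j be the largest index with a_j = a + 2. Then i < j, and there exists an arc configuration of w containing the arc (i, j). -/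
lemma swap_config (n : ℕ) (w : ℕ → ℤ) (C : Finset (ℕ × ℕ))
    (hC : IsArcConfig n w C) (p q r s : ℕ × ℕ) (hp : p ∈ C) (hq : q ∈ C)
    (hr : 1 ≤ r.1 ∧ r.1 < r.2 ∧ r.2 ≤ 2 * n ∧ w r.2 = w r.1 + 2)
    (hs : 1 ≤ s.1 ∧ s.1 < s.2 ∧ s.2 ≤ 2 * n ∧ w s.2 = w s.1 + 2)
    (hd : r.1 ≠ s.1 ∧ r.1 ≠ s.2 ∧ r.2 ≠ s.1 ∧ r.2 ≠ s.2)
    (hset : ∀ k, (r.1 = k ∨ r.2 = k ∨ s.1 = k ∨ s.2 = k) ↔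
                 (p.1 = k ∨ p.2 = k ∨ q.1 = k ∨ q.2 = k)) :
    IsArcConfig n w ((C \ {p, q}) ∪ {r, s}) := by
  obtain ⟨h1, h2⟩ := hC
  constructor
  · intro t ht
    simp only [Finset.mem_union, Finset.mem_sdiff, Finset.mem_insert, Finset.mem_singleton] at ht
    rcases ht with ⟨htC, -⟩ | htr | hts
    · exact h1 t htC
    · subst htr; exact hr
    · subst hts; exact hs
  · intro k hk1 hk2
    -- helper: any element of C \ {p,q} covering k means ¬(p or q covers k)
    have key : ∀ t ∈ C, (t.1 = k ∨ t.2 = k) → t ≠ p → t ≠ q →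
        ¬ (p.1 = k ∨ p.2 = k ∨ q.1 = k ∨ q.2 = k) := by
      intro t htC htk htp htq hcon
      obtain ⟨u, -, hu⟩ := h2 k hk1 hk2
      have ht' := hu t ⟨htC, htk⟩
      rcases hcon with h | h | h | h
      · exact htp (ht'.trans (hu p ⟨hp, Or.inl h⟩).symm)
      · exact htp (ht'.trans (hu p ⟨hp, Or.inr h⟩).symm)
      · exact htq (ht'.trans (hu q ⟨hq, Or.inl h⟩).symm)
      · exact htq (ht'.trans (hu q ⟨hq, Or.inr h⟩).symm)
    have hrs : ¬ ((r.1 = k ∨ r.2 = k) ∧ (s.1 = k ∨ s.2 = k)) := by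
      rintro ⟨h | h, h' | h'⟩ <;> omega
    by_cases hpq : p.1 = k ∨ p.2 = k ∨ q.1 = k ∨ q.2 = k
    · -- witness r or s
      have := (hset k).mpr hpq
      have hw : ∃ t, (t = r ∨ t = s) ∧ (t.1 = k ∨ t.2 = k) := by
        rcases this with h | h | h | h
        exacts [⟨r, Or.inl rfl, Or.inl h⟩, ⟨r, Or.inl rfl, Or.inr h⟩,
          ⟨s, Or.inr rfl, Or.inl h⟩, ⟨s, Or.inr rfl, Or.inr h⟩]
      obtain ⟨t, htrs, htk⟩ := hw
      refine ⟨t, ⟨?_, htk⟩, ?_⟩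
      · simp only [Finset.mem_union, Finset.mem_insert, Finset.mem_singleton]
        right; exact htrs
      · rintro u ⟨hu, huk⟩
        simp only [Finset.mem_union, Finset.mem_sdiff, Finset.mem_insert,
          Finset.mem_singleton] at hu
        rcases hu with ⟨huC, hune⟩ | hur | hus
        · exact absurd hpq (key u huC huk (fun h => hune (Or.inl h)) (fun h => hune (Or.inr h)))
        · subst hur
          rcases htrs with h | h
          · exact h ▸ rfl
          · exact absurd ⟨huk, h ▸ htk⟩ hrs
        · subst hus
          rcases htrs with h | h
          · exact absurd ⟨h ▸ htk, huk⟩ hrs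
          · exact h ▸ rfl
    · -- witness: unique old arc, which is ≠ p, q
      obtain ⟨t, ⟨htC, htk⟩, hu⟩ := h2 k hk1 hk2
      have htp : t ≠ p := by rintro rfl; rcases htk with h | h <;> exact hpq (by tauto)
      have htq : t ≠ q := by rintro rfl; rcases htk with h | h <;> exact hpq (by tauto)
      refine ⟨t, ⟨?_, htk⟩, ?_⟩
      · simp only [Finset.mem_union, Finset.mem_sdiff, Finset.mem_insert, Finset.mem_singleton]
        exact Or.inl ⟨htC, by tauto⟩
      · rintro u ⟨huMem, huk⟩
        simp only [Finset.mem_union, Finset.mem_sdiff, Finset.mem_insert,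
          Finset.mem_singleton] at huMem
        rcases huMem with ⟨huC, -⟩ | hur | hus
        · exact hu u ⟨huC, huk⟩
        · subst hur
          exact absurd ((hset k).mp (by tauto)) hpq
        · subst hus
          exact absurd ((hset k).mp (by tauto)) hpq

/-- Let `w` admit an arc configuration, let `a` be the minimal letter of `w`, let `i` be the
largest position carrying `a` and `j` the largest position carrying `a + 2`. Then `i < j` and
some arc configuration of `w` contains the arc `(i, j)`. -/
theorem arcConfig_with_rightmost_min_arc (n : ℕ) (w : ℕ → ℤ) (a : ℤ) (i j : ℕ)
    (hC : ∃ C : Finset (ℕ × ℕ), IsArcConfig n w C)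
    (hmin : ∀ k, 1 ≤ k → k ≤ 2 * n → a ≤ w k)
    (hi : 1 ≤ i ∧ i ≤ 2 * n ∧ w i = a ∧ ∀ k, 1 ≤ k → k ≤ 2 * n → w k = a → k ≤ i)
    (hj : 1 ≤ j ∧ j ≤ 2 * n ∧ w j = a + 2 ∧ ∀ k, 1 ≤ k → k ≤ 2 * n → w k = a + 2 → k ≤ j) :
    i < j ∧ ∃ C : Finset (ℕ × ℕ), IsArcConfig n w C ∧ (i, j) ∈ C := by
  obtain ⟨C, hCfg⟩ := hC
  obtain ⟨h1, h2⟩ := hCfg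
  obtain ⟨hi1, hi2, hia, himax⟩ := hi
  obtain ⟨hj1, hj2, hja, hjmax⟩ := hj
  -- the arc covering i
  obtain ⟨⟨p1, p2⟩, ⟨hpC, hpk⟩, hpu⟩ := h2 i hi1 hi2
  obtain ⟨hp1, hplt, hp2, hpw⟩ := h1 _ hpC
  simp only at hpk hp1 hplt hp2 hpw ⊢
  have hp1i : p1 = i := by
    rcases hpk with h | h
    · exact h
    · exfalso
      subst h
      have := hmin p1 hp1 (by omega)
      rw [hia] at hpw
      linarith
  subst p1
  have hwp2 : w p2 = a + 2 := by rw [hpw, hia]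
  have hp2j : p2 ≤ j := hjmax p2 (by omega) hp2 hwp2
  have hiltj : i < j := by omega
  refine ⟨hiltj, ?_⟩
  by_cases hij : p2 = j
  · subst hij
    exact ⟨C, ⟨h1, h2⟩, hpC⟩
  have hp2ltj : p2 < j := by omega
  -- the arc covering j
  obtain ⟨⟨q1, q2⟩, ⟨hqC, hqk⟩, hqu⟩ := h2 j hj1 hj2
  obtain ⟨hq1, hqlt, hq2, hqw⟩ := h1 _ hqC
  simp only at hqk hq1 hqlt hq2 hqw
  rcases hqk with hq1j | hq2j
  · -- q = (j, q2), w q2 = a + 4 ; swap to (i,j) and (p2, q2)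
    subst q1
    have hwq2 : w q2 = a + 4 := by rw [hqw, hja]; ring
    refine ⟨(C \ {(i, p2), (j, q2)}) ∪ {(i, j), (p2, q2)},
      swap_config n w C ⟨h1, h2⟩ (i, p2) (j, q2) (i, j) (p2, q2) hpC hqC
        ⟨hi1, by omega, hj2, by rw [hja, hia]⟩
        ⟨by omega, by omega, hq2, by rw [hwq2, hwp2]; ring⟩
        ⟨by omega, by omega, by omega, by omega⟩
        (by intro k; simp only; tauto), ?_⟩
    simp
  · -- q = (q1, j), w q1 = a ; swap to (i,j) and (q1, p2)
    subst q2
    have hwq1 : w q1 = a := by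
      have := hmin q1 hq1 (by omega)
      rw [hja] at hqw
      linarith
    have hq1i : q1 ≤ i := himax q1 hq1 (by omega) hwq1
    have hq1ne : q1 ≠ i := by
      rintro rfl
      have := hpu (q1, j) ⟨hqC, Or.inl rfl⟩
      simp only [Prod.mk.injEq] at this
      omega
    refine ⟨(C \ {(i, p2), (q1, j)}) ∪ {(i, j), (q1, p2)},
      swap_config n w C ⟨h1, h2⟩ (i, p2) (q1, j) (i, j) (q1, p2) hpC hqC
        ⟨hi1, hiltj, hj2, by rw [hja, hia]⟩
        ⟨hq1, by omega, by omega, by rw [hwp2, hwq1]⟩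
        ⟨by omega, by omega, by omega, by omega⟩
        (by intro k; simp only; tauto), ?_⟩
    simp
end

section
/- Every sequence of integers w = (a_1, ..., a_{2n}) that admits an arc configuration also admits an irreducible arc configuration, i.e. one in which every pair of intersecting arcs (i1,j1), (i2,j2) with i1 < i2 < j1 < j2 satisfies a_{i2} ∉ {a_{i1}, a_{i1}+2}. -/
/-- An arc configuration is irreducible if for every pair of intersecting arcs
`(i₁,j₁), (i₂,j₂)` with `i₁ < i₂ < j₁ < j₂` one has `w i₂ ∉ {w i₁, w i₁ + 2}`. -/
def IsIrreducibleConfig (w : ℕ → ℤ) (C : Finset (ℕ × ℕ)) : Prop :=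
  ∀ p ∈ C, ∀ q ∈ C, p.1 < q.1 → q.1 < p.2 → p.2 < q.2 →
    w q.1 ≠ w p.1 ∧ w q.1 ≠ w p.1 + 2

namespace ArcAux

/-- If an arc `r ∈ C` shares an endpoint with `p` or `q` (both in `C`), then `r = p` or
`r = q`. -/
lemma eq_of_shares_endpoint (n : ℕ) (w : ℕ → ℤ) (C : Finset (ℕ × ℕ))
    (hC : IsArcConfig n w C) (p q r : ℕ × ℕ) (hp : p ∈ C) (hq : q ∈ C) (hr : r ∈ C)
    (k : ℕ) (hrk : r.1 = k ∨ r.2 = k)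
    (hk : p.1 = k ∨ p.2 = k ∨ q.1 = k ∨ q.2 = k) : r = p ∨ r = q := by
  have hrb := hC.1 r hr
  have hpb := hC.1 p hp
  have hqb := hC.1 q hq
  have hk1 : 1 ≤ k := by omega
  have hk2 : k ≤ 2 * n := by omega
  obtain ⟨s, _, hsu⟩ := hC.2 k hk1 hk2
  have hrs : r = s := hsu r ⟨hr, hrk⟩
  rcases hk with h | h | h | h
  · exact Or.inl (by rw [hrs, hsu p ⟨hp, Or.inl h⟩])
  · exact Or.inl (by rw [hrs, hsu p ⟨hp, Or.inr h⟩])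
  · exact Or.inr (by rw [hrs, hsu q ⟨hq, Or.inl h⟩])
  · exact Or.inr (by rw [hrs, hsu q ⟨hq, Or.inr h⟩])

/-- Replacing two arcs `p, q` of a configuration by two arcs `p', q'` on the same four
endpoints yields a configuration. -/
lemma replace_config (n : ℕ) (w : ℕ → ℤ) (C : Finset (ℕ × ℕ)) (hC : IsArcConfig n w C)
    (p q p' q' : ℕ × ℕ) (hp : p ∈ C) (hq : q ∈ C)
    (hp' : 1 ≤ p'.1 ∧ p'.1 < p'.2 ∧ p'.2 ≤ 2 * n ∧ w p'.2 = w p'.1 + 2)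
    (hq' : 1 ≤ q'.1 ∧ q'.1 < q'.2 ∧ q'.2 ≤ 2 * n ∧ w q'.2 = w q'.1 + 2)
    (hcov : ∀ k, (p.1 = k ∨ p.2 = k ∨ q.1 = k ∨ q.2 = k) ↔
      (p'.1 = k ∨ p'.2 = k ∨ q'.1 = k ∨ q'.2 = k))
    (hsep : ∀ k, ¬((p'.1 = k ∨ p'.2 = k) ∧ (q'.1 = k ∨ q'.2 = k))) :
    IsArcConfig n w (insert p' (insert q' ((C.erase p).erase q))) := by
  constructor
  · intro r hr
    simp only [Finset.mem_insert, Finset.mem_erase] at hr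
    rcases hr with rfl | rfl | ⟨_, _, hrC⟩
    · exact hp'
    · exact hq'
    · exact hC.1 r hrC
  · intro k hk1 hk2
    obtain ⟨r, ⟨hrC, hrk⟩, hru⟩ := hC.2 k hk1 hk2
    by_cases h4 : p.1 = k ∨ p.2 = k ∨ q.1 = k ∨ q.2 = k
    · -- k is one of the four endpoints; the unique new arc through k is p' or q'
      have h4' := (hcov k).mp h4
      -- choose the witness
      have hwit : ∃ s, (s = p' ∨ s = q') ∧ (s.1 = k ∨ s.2 = k) := by
        rcases h4' with h | h | h | h
        · exact ⟨p', Or.inl rfl, Or.inl h⟩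
        · exact ⟨p', Or.inl rfl, Or.inr h⟩
        · exact ⟨q', Or.inr rfl, Or.inl h⟩
        · exact ⟨q', Or.inr rfl, Or.inr h⟩
      obtain ⟨s, hs, hsk⟩ := hwit
      refine ⟨s, ⟨by rcases hs with rfl | rfl <;> simp, hsk⟩, ?_⟩
      rintro r' ⟨hr', hr'k⟩
      simp only [Finset.mem_insert, Finset.mem_erase] at hr'
      rcases hr' with rfl | rfl | ⟨hr'q, hr'p, hr'C⟩
      · -- r' = p'
        rcases hs with rfl | rfl
        · rfl
        · exact absurd ⟨hr'k, hsk⟩ (hsep k)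
      · -- r' = q'
        rcases hs with rfl | rfl
        · exact absurd ⟨hsk, hr'k⟩ (hsep k)
        · rfl
      · -- r' ∈ C, r' ≠ p, r' ≠ q : impossible since k is an endpoint of p or q
        have := eq_of_shares_endpoint n w C hC p q r' hp hq hr'C k hr'k h4
        tauto
    · -- k is not among the four endpoints; the old arc r still works
      push_neg at h4
      have hrp : r ≠ p := by
        rintro rfl; rcases hrk with h | h
        · exact h4.1 h
        · exact h4.2.1 h
      have hrq : r ≠ q := by
        rintro rfl; rcases hrk with h | h
        · exact h4.2.2.1 h
        · exact h4.2.2.2 h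
      have h4' : ¬(p'.1 = k ∨ p'.2 = k ∨ q'.1 = k ∨ q'.2 = k) := by
        rw [← hcov k]; tauto
      push_neg at h4'
      refine ⟨r, ⟨by simp [Finset.mem_insert, Finset.mem_erase, hrq, hrp, hrC], hrk⟩, ?_⟩
      rintro r' ⟨hr', hr'k⟩
      simp only [Finset.mem_insert, Finset.mem_erase] at hr'
      rcases hr' with rfl | rfl | ⟨_, _, hr'C⟩
      · rcases hr'k with h | h
        · exact absurd h h4'.1
        · exact absurd h h4'.2.1
      · rcases hr'k with h | h
        · exact absurd h h4'.2.2.1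
        · exact absurd h h4'.2.2.2
      · exact hru r' ⟨hr'C, hr'k⟩

/-- A new arc whose first endpoint is among the endpoints of `p, q` cannot lie in
`(C.erase p).erase q`. -/
lemma not_mem_erase (n : ℕ) (w : ℕ → ℤ) (C : Finset (ℕ × ℕ)) (hC : IsArcConfig n w C)
    (p q p' : ℕ × ℕ) (hp : p ∈ C) (hq : q ∈ C)
    (hk : p.1 = p'.1 ∨ p.2 = p'.1 ∨ q.1 = p'.1 ∨ q.2 = p'.1) :
    p' ∉ (C.erase p).erase q := by
  intro hmem
  simp only [Finset.mem_erase] at hmem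
  obtain ⟨hne_q, hne_p, hmemC⟩ := hmem
  have := eq_of_shares_endpoint n w C hC p q p' hp hq hmemC p'.1 (Or.inl rfl) hk
  tauto

/-- The product of arc lengths of the modified configuration. -/
lemma prod_replace (C : Finset (ℕ × ℕ)) (p q p' q' : ℕ × ℕ) (hp : p ∈ C) (hq : q ∈ C)
    (hpq : p ≠ q) (hp'q' : p' ≠ q')
    (hp'' : p' ∉ (C.erase p).erase q) (hq'' : q' ∉ (C.erase p).erase q)
    (hlen : (p'.2 - p'.1) * (q'.2 - q'.1) < (p.2 - p.1) * (q.2 - q.1))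
    (hpos : ∀ r ∈ C, r.1 < r.2) :
    (∏ x ∈ insert p' (insert q' ((C.erase p).erase q)), (x.2 - x.1)) <
      ∏ x ∈ C, (x.2 - x.1) := by
  have hq'i : q' ∉ (C.erase p).erase q := hq''
  have hp'i : p' ∉ insert q' ((C.erase p).erase q) := by
    simp [Finset.mem_insert, hp'q', hp'']
  rw [Finset.prod_insert hp'i, Finset.prod_insert hq'i, ← mul_assoc]
  have hCeq : C = insert p (insert q ((C.erase p).erase q)) := by
    ext r
    simp only [Finset.mem_insert, Finset.mem_erase]
    constructor
    · intro hr
      by_cases h1 : r = p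
      · exact Or.inl h1
      by_cases h2 : r = q
      · exact Or.inr (Or.inl h2)
      · exact Or.inr (Or.inr ⟨h2, h1, hr⟩)
    · rintro (rfl | rfl | ⟨_, _, hr⟩) <;> assumption
  have hpi : p ∉ insert q ((C.erase p).erase q) := by
    simp [Finset.mem_insert, hpq, Finset.mem_erase]
  have hqi : q ∉ (C.erase p).erase q := by simp [Finset.mem_erase]
  conv_rhs => rw [hCeq]
  rw [Finset.prod_insert hpi, Finset.prod_insert hqi, ← mul_assoc]
  have hrestpos : 0 < ∏ x ∈ (C.erase p).erase q, (x.2 - x.1) := by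
    apply Finset.prod_pos
    intro r hr
    simp only [Finset.mem_erase] at hr
    have := hpos r hr.2.2
    omega
  exact Nat.mul_lt_mul_of_lt_of_le hlen (le_refl _) hrestpos

end ArcAux

/-- Every word admitting an arc configuration admits an irreducible arc configuration. -/
theorem exists_irreducible_config (n : ℕ) (w : ℕ → ℤ)
    (h : ∃ C : Finset (ℕ × ℕ), IsArcConfig n w C) :
    ∃ C : Finset (ℕ × ℕ), IsArcConfig n w C ∧ IsIrreducibleConfig w C := by
  obtain ⟨C, hC⟩ := h
  -- induction on the product of arc lengths
  suffices H : ∀ N : ℕ, ∀ C : Finset (ℕ × ℕ), (∏ x ∈ C, (x.2 - x.1)) < N →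
      IsArcConfig n w C → ∃ C', IsArcConfig n w C' ∧ IsIrreducibleConfig w C' by
    exact H ((∏ x ∈ C, (x.2 - x.1)) + 1) C (Nat.lt_succ_self _) hC
  intro N
  induction N with
  | zero => intro C hlt _; omega
  | succ N ih =>
    intro C hlt hC
    by_cases hirr : IsIrreducibleConfig w C
    · exact ⟨C, hC, hirr⟩
    · -- find a reducible crossing
      unfold IsIrreducibleConfig at hirr
      push_neg at hirr
      obtain ⟨p, hp, q, hq, hab, hbc, hcd, hval⟩ := hirr
      have hpb := hC.1 p hp
      have hqb := hC.1 q hq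
      obtain ⟨ha1, hac, hc2n, hwc⟩ := hpb
      obtain ⟨hb1, hbd, hd2n, hwd⟩ := hqb
      have hpq : p ≠ q := by
        intro h'; rw [h'] at hab; omega
      have hval' : w q.1 = w p.1 ∨ w q.1 = w p.1 + 2 := by tauto
      -- choose the rewiring depending on the case
      have key : ∃ p' q' : ℕ × ℕ,
          (1 ≤ p'.1 ∧ p'.1 < p'.2 ∧ p'.2 ≤ 2 * n ∧ w p'.2 = w p'.1 + 2) ∧
          (1 ≤ q'.1 ∧ q'.1 < q'.2 ∧ q'.2 ≤ 2 * n ∧ w q'.2 = w q'.1 + 2) ∧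
          (∀ k, (p.1 = k ∨ p.2 = k ∨ q.1 = k ∨ q.2 = k) ↔
            (p'.1 = k ∨ p'.2 = k ∨ q'.1 = k ∨ q'.2 = k)) ∧
          (∀ k, ¬((p'.1 = k ∨ p'.2 = k) ∧ (q'.1 = k ∨ q'.2 = k))) ∧
          (p.1 = p'.1 ∨ p.2 = p'.1 ∨ q.1 = p'.1 ∨ q.2 = p'.1) ∧
          (p.1 = q'.1 ∨ p.2 = q'.1 ∨ q.1 = q'.1 ∨ q.2 = q'.1) ∧
          (p'.2 - p'.1) * (q'.2 - q'.1) < (p.2 - p.1) * (q.2 - q.1) := by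
        rcases hval' with hv | hv
        · -- case A: w q.1 = w p.1 ; rewire to nested arcs (p.1, q.2), (q.1, p.2)
          refine ⟨(p.1, q.2), (q.1, p.2), ⟨ha1, by omega, hd2n, by rw [hwd, hv]⟩,
            ⟨hb1, hbc, hc2n, by rw [hwc, hv]⟩, ?_, ?_, by simp, by simp, ?_⟩
          · intro k; simp only; omega
          · intro k; simp only; omega
          · simp only
            have h1 : p.1 < q.1 := hab
            have h2 : q.1 < p.2 := hbc
            have h3 : p.2 < q.2 := hcd
            zify [le_of_lt hab, le_of_lt hbc, le_of_lt hcd, le_of_lt hac,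
              le_of_lt hbd, le_of_lt (lt_trans hab (lt_trans hbc hcd))]
            nlinarith [hab, hbc, hcd]
        · -- case B: w q.1 = w p.1 + 2 ; rewire to disjoint arcs (p.1, q.1), (p.2, q.2)
          refine ⟨(p.1, q.1), (p.2, q.2), ⟨ha1, hab, by omega, hv⟩,
            ⟨by omega, hcd, hd2n, by rw [hwd, hv, hwc]⟩, ?_, ?_, by simp, by simp, ?_⟩
          · intro k; simp only; omega
          · intro k; simp only; omega
          · simp only
            zify [le_of_lt hab, le_of_lt hcd, le_of_lt hac, le_of_lt hbd]
            nlinarith [hab, hbc, hcd]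
      obtain ⟨p', q', hp', hq', hcov, hsep, hp'e, hq'e, hlen⟩ := key
      set C' : Finset (ℕ × ℕ) := insert p' (insert q' ((C.erase p).erase q)) with hC'def
      have hC' : IsArcConfig n w C' :=
        ArcAux.replace_config n w C hC p q p' q' hp hq hp' hq' hcov hsep
      have hp'q' : p' ≠ q' := by
        intro h'
        exact hsep p'.1 ⟨Or.inl rfl, by rw [← h']; exact Or.inl rfl⟩
      have hp'' : p' ∉ (C.erase p).erase q :=
        ArcAux.not_mem_erase n w C hC p q p' hp hq hp'e
      have hq'' : q' ∉ (C.erase p).erase q :=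
        ArcAux.not_mem_erase n w C hC p q q' hp hq hq'e
      have hprod : (∏ x ∈ C', (x.2 - x.1)) < ∏ x ∈ C, (x.2 - x.1) :=
        ArcAux.prod_replace C p q p' q' hp hq hpq hp'q' hp'' hq'' hlen
          (fun r hr => (hC.1 r hr).2.1)
      exact ih C' (by omega) hC'
end

section
/- Let w = (a_1, ..., a_{2n}) be a sequence of integers and let s(w) = (a_2, ..., a_{2n}, a_1 + 4) be its slide. The map sending an arc configuration C = {(1, j_1)} ∪ {(i,j) : other arcs} of w to {(j_1 - 1, 2n)} ∪ {(i-1, j-1) : (i,j) ∈ C, i ≥ 2} is a bijection from the set of arc configurations of w onto the set of arc configurations of s(w); moreover it preserves the number of intersecting pairs of arcs and the number of reducible intersecting pairs (in particular, it maps irreducible configurations to irreducible configurations). -/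
/-- The slide `s(w) = (a_2, ..., a_{2n}, a_1 + 4)` of the word `w = (a_1, ..., a_{2n})`. -/
def slideWord (n : ℕ) (w : ℕ → ℤ) : ℕ → ℤ :=
  fun k => if k = 2 * n then w 1 + 4 else w (k + 1)

/-- The induced map on arc configurations: `(1, j₁) ↦ (j₁ - 1, 2n)` and
`(i, j) ↦ (i - 1, j - 1)` for `i ≥ 2`. -/
def slideConf (n : ℕ) (C : Finset (ℕ × ℕ)) : Finset (ℕ × ℕ) :=
  C.image fun p => if p.1 = 1 then (p.2 - 1, 2 * n) else (p.1 - 1, p.2 - 1)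

/-- The set of (ordered) pairs of intersecting arcs of `C`: pairs of arcs
`((i₁,j₁),(i₂,j₂))` with `i₁ < i₂ < j₁ < j₂`. -/
def interPairs (C : Finset (ℕ × ℕ)) : Finset ((ℕ × ℕ) × (ℕ × ℕ)) :=
  (C ×ˢ C).filter fun pq => pq.1.1 < pq.2.1 ∧ pq.2.1 < pq.1.2 ∧ pq.1.2 < pq.2.2

/-- The set of pairs of reducibly intersecting arcs of `C` in the word `w`: pairs as above
with moreover `w i₂ ∈ {w i₁, w i₁ + 2}`. -/
def redPairs (w : ℕ → ℤ) (C : Finset (ℕ × ℕ)) : Finset ((ℕ × ℕ) × (ℕ × ℕ)) :=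
  (C ×ˢ C).filter fun pq => pq.1.1 < pq.2.1 ∧ pq.2.1 < pq.1.2 ∧ pq.1.2 < pq.2.2 ∧
    (w pq.2.1 = w pq.1.1 ∨ w pq.2.1 = w pq.1.1 + 2)

open Finset

lemma Finset.image_image_of_leftInvOn {α β : Type*} [DecidableEq α] [DecidableEq β]
    {s : Finset α} {f : α → β} {g : β → α} (h : ∀ a ∈ s, g (f a) = a) :
    (s.image f).image g = s := by
  rw [image_image, image_congr (f := g ∘ f) (g := id) fun a ha => h a ha, image_id]

lemma Finset.card_filter_eq_of_invOn {α β : Type*} {s : Finset α} {t : Finset β}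
    (f : α → β) (g : β → α) (hf : ∀ a ∈ s, f a ∈ t) (hg : ∀ b ∈ t, g b ∈ s)
    (hgf : ∀ a ∈ s, g (f a) = a) (hfg : ∀ b ∈ t, f (g b) = b)
    {P : α → Prop} {Q : β → Prop} [DecidablePred P] [DecidablePred Q]
    (hPQ : ∀ a ∈ s, P a ↔ Q (f a)) :
    (s.filter P).card = (t.filter Q).card := by
  refine card_nbij' f g (fun a ha => ?_) (fun b hb => ?_)
    (fun a ha => hgf a (mem_filter.1 ha).1) (fun b hb => hfg b (mem_filter.1 hb).1)
  · obtain ⟨has, hPa⟩ := mem_filter.1 ha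
    exact mem_filter.2 ⟨hf a has, (hPQ a has).1 hPa⟩
  · obtain ⟨hbt, hQb⟩ := mem_filter.1 hb
    refine mem_filter.2 ⟨hg b hbt, (hPQ _ (hg b hbt)).2 ?_⟩
    rwa [hfg b hbt]

section Slide

variable {n : ℕ} {w : ℕ → ℤ}

def IsArc (n : ℕ) (w : ℕ → ℤ) (p : ℕ × ℕ) : Prop :=
  1 ≤ p.1 ∧ p.1 < p.2 ∧ p.2 ≤ 2 * n ∧ w p.2 = w p.1 + 2

def slideArc (n : ℕ) (p : ℕ × ℕ) : ℕ × ℕ :=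
  if p.1 = 1 then (p.2 - 1, 2 * n) else (p.1 - 1, p.2 - 1)

def unslideArc (n : ℕ) (q : ℕ × ℕ) : ℕ × ℕ :=
  if q.2 = 2 * n then (1, q.1 + 1) else (q.1 + 1, q.2 + 1)

lemma slideWord_of_ne {k : ℕ} (hk : k ≠ 2 * n) : slideWord n w k = w (k + 1) := if_neg hk

lemma slideWord_two_mul : slideWord n w (2 * n) = w 1 + 4 := if_pos rfl

lemma IsArc.slide {p : ℕ × ℕ} (hp : IsArc n w p) : IsArc n (slideWord n w) (slideArc n p) := by
  obtain ⟨h1, h12, h2, hw⟩ := hp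
  unfold slideArc
  split_ifs with hp1
  · refine ⟨by omega, by omega, le_rfl, ?_⟩
    rw [slideWord_two_mul, slideWord_of_ne (by omega), Nat.sub_add_cancel (by omega), hw, hp1]
    ring
  · refine ⟨by omega, by omega, by omega, ?_⟩
    rw [slideWord_of_ne (by omega), slideWord_of_ne (by omega), Nat.sub_add_cancel (by omega),
      Nat.sub_add_cancel h1, hw]

lemma IsArc.unslide {q : ℕ × ℕ} (hq : IsArc n (slideWord n w) q) :
    IsArc n w (unslideArc n q) := by
  obtain ⟨h1, h12, h2, hw⟩ := hq
  rw [slideWord_of_ne (by omega : q.1 ≠ 2 * n)] at hw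
  unfold unslideArc
  split_ifs with hq2
  · rw [hq2, slideWord_two_mul] at hw
    exact ⟨le_rfl, by omega, by omega, by linarith⟩
  · rw [slideWord_of_ne hq2] at hw
    exact ⟨by omega, by omega, by omega, hw⟩

lemma IsArc.unslideArc_slideArc {p : ℕ × ℕ} (hp : IsArc n w p) :
    unslideArc n (slideArc n p) = p := by
  obtain ⟨h1, h12, h2, -⟩ := hp
  unfold slideArc unslideArc
  split_ifs <;> simp only [Prod.ext_iff] <;> omega

lemma IsArc.slideArc_unslideArc {q : ℕ × ℕ} (hq : IsArc n w q) :
    slideArc n (unslideArc n q) = q := by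
  obtain ⟨h1, h12, h2, -⟩ := hq
  unfold slideArc unslideArc
  split_ifs <;> simp only [Prod.ext_iff] <;> omega

lemma IsArc.slideWord_slideArc_fst_of_eq_one {p : ℕ × ℕ} (hp : IsArc n w p) (h : p.1 = 1) :
    slideWord n w (slideArc n p).1 = w 1 + 2 := by
  obtain ⟨-, h12, h2, hw⟩ := hp
  rw [slideArc, if_pos h, slideWord_of_ne (by omega), Nat.sub_add_cancel (by omega), hw, h]

lemma IsArc.slideWord_slideArc_fst_of_ne_one {p : ℕ × ℕ} (hp : IsArc n w p) (h : p.1 ≠ 1) :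
    slideWord n w (slideArc n p).1 = w p.1 := by
  obtain ⟨h1, h12, h2, -⟩ := hp
  rw [slideArc, if_neg h, slideWord_of_ne (by omega), Nat.sub_add_cancel h1]

lemma IsArc.endpoint_slideArc_iff {p : ℕ × ℕ} (hp : IsArc n w p) {k : ℕ} (hk : 1 ≤ k) :
    ((slideArc n p).1 = k ∨ (slideArc n p).2 = k) ↔
      (p.1 = (if k = 2 * n then 1 else k + 1) ∨ p.2 = (if k = 2 * n then 1 else k + 1)) := by
  obtain ⟨h1, h12, h2, -⟩ := hp
  unfold slideArc
  split_ifs <;> omega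

lemma IsArc.endpoint_unslideArc_iff {q : ℕ × ℕ} (hq : IsArc n w q) {k : ℕ} (hk1 : 1 ≤ k)
    (hk2 : k ≤ 2 * n) :
    ((unslideArc n q).1 = k ∨ (unslideArc n q).2 = k) ↔
      (q.1 = (if k = 1 then 2 * n else k - 1) ∨ q.2 = (if k = 1 then 2 * n else k - 1)) := by
  obtain ⟨h1, h12, h2, -⟩ := hq
  unfold unslideArc
  split_ifs <;> omega

/-- `σ k` is the endpoint that `f` moves to `k`. -/
lemma IsArcConfig.image {w' : ℕ → ℤ} {C : Finset (ℕ × ℕ)} (hC : IsArcConfig n w C)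
    (f : ℕ × ℕ → ℕ × ℕ) (σ : ℕ → ℕ) (hf : ∀ p, IsArc n w p → IsArc n w' (f p))
    (hσ : ∀ k, 1 ≤ k → k ≤ 2 * n → 1 ≤ σ k ∧ σ k ≤ 2 * n)
    (hend : ∀ p, IsArc n w p → ∀ k, 1 ≤ k → k ≤ 2 * n →
      ((f p).1 = k ∨ (f p).2 = k ↔ p.1 = σ k ∨ p.2 = σ k)) :
    IsArcConfig n w' (C.image f) := by
  refine ⟨forall_mem_image.2 fun p hp => hf p (hC.1 p hp), fun k hk1 hk2 => ?_⟩
  obtain ⟨p, ⟨hpC, hpk⟩, hp_unique⟩ := hC.2 (σ k) (hσ k hk1 hk2).1 (hσ k hk1 hk2).2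
  refine ⟨f p, ⟨mem_image_of_mem f hpC, (hend p (hC.1 p hpC) k hk1 hk2).2 hpk⟩, ?_⟩
  rintro _ ⟨hq, hqk⟩
  obtain ⟨q, hqC, rfl⟩ := mem_image.1 hq
  rw [hp_unique q ⟨hqC, (hend q (hC.1 q hqC) k hk1 hk2).1 hqk⟩]

lemma IsArcConfig.slide {C : Finset (ℕ × ℕ)} (hC : IsArcConfig n w C) :
    IsArcConfig n (slideWord n w) (slideConf n C) :=
  hC.image _ _ (fun _ hp => hp.slide) (fun k _ _ => by split_ifs <;> omega)
    fun _ hp _ hk _ => hp.endpoint_slideArc_iff hk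

lemma IsArcConfig.image_unslideArc {C' : Finset (ℕ × ℕ)}
    (hC' : IsArcConfig n (slideWord n w) C') : IsArcConfig n w (C'.image (unslideArc n)) :=
  hC'.image _ _ (fun _ hq => hq.unslide) (fun k _ _ => by split_ifs <;> omega)
    fun _ hq _ hk1 hk2 => hq.endpoint_unslideArc_iff hk1 hk2

lemma IsArcConfig.slideConf_image_unslideArc {C' : Finset (ℕ × ℕ)}
    (hC' : IsArcConfig n (slideWord n w) C') : slideConf n (C'.image (unslideArc n)) = C' :=
  image_image_of_leftInvOn fun _ hq => IsArc.slideArc_unslideArc (hC'.1 _ hq)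

lemma IsArcConfig.image_unslideArc_slideConf {C : Finset (ℕ × ℕ)} (hC : IsArcConfig n w C) :
    (slideConf n C).image (unslideArc n) = C :=
  image_image_of_leftInvOn fun _ hp => IsArc.unslideArc_slideArc (hC.1 _ hp)

/-- The arc starting at `1` is sent to the arc ending at `2n`, so a crossing pair containing it
has to swap its components. -/
def slidePair (n : ℕ) (pq : (ℕ × ℕ) × (ℕ × ℕ)) : (ℕ × ℕ) × (ℕ × ℕ) :=
  if pq.1.1 = 1 then (slideArc n pq.2, slideArc n pq.1) else (slideArc n pq.1, slideArc n pq.2)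

def unslidePair (n : ℕ) (pq : (ℕ × ℕ) × (ℕ × ℕ)) : (ℕ × ℕ) × (ℕ × ℕ) :=
  if pq.2.2 = 2 * n then (unslideArc n pq.2, unslideArc n pq.1)
  else (unslideArc n pq.1, unslideArc n pq.2)

abbrev IsReducible (w : ℕ → ℤ) (pq : (ℕ × ℕ) × (ℕ × ℕ)) : Prop :=
  w pq.2.1 = w pq.1.1 ∨ w pq.2.1 = w pq.1.1 + 2

lemma redPairs_eq_filter (w : ℕ → ℤ) (C : Finset (ℕ × ℕ)) :
    redPairs w C = (interPairs C).filter (IsReducible w) := by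
  simp only [redPairs, interPairs, filter_filter, and_assoc]

lemma redPairs_eq_empty_iff {C : Finset (ℕ × ℕ)} :
    redPairs w C = ∅ ↔ IsIrreducibleConfig w C := by
  simp only [redPairs, filter_eq_empty_iff, mem_product, IsIrreducibleConfig, not_and, not_or]
  exact ⟨fun h p hp q hq => h (x := (p, q)) ⟨hp, hq⟩, fun h pq hpq => h _ hpq.1 _ hpq.2⟩

lemma mem_interPairs {C : Finset (ℕ × ℕ)} {p q : ℕ × ℕ} :
    (p, q) ∈ interPairs C ↔ (p ∈ C ∧ q ∈ C) ∧ p.1 < q.1 ∧ q.1 < p.2 ∧ p.2 < q.2 := by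
  simp only [interPairs, mem_filter, mem_product]

variable {C C' : Finset (ℕ × ℕ)}

lemma slidePair_mem_interPairs (hC : ∀ p ∈ C, IsArc n w p) (hCC' : ∀ p ∈ C, slideArc n p ∈ C')
    {pq : (ℕ × ℕ) × (ℕ × ℕ)} (h : pq ∈ interPairs C) : slidePair n pq ∈ interPairs C' := by
  obtain ⟨p, q⟩ := pq
  obtain ⟨⟨hpC, hqC⟩, hpq⟩ := mem_interPairs.1 h
  obtain ⟨hp_pos, -, -, -⟩ := hC p hpC
  obtain ⟨-, -, hq_le, -⟩ := hC q hqC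
  have hq1 : q.1 ≠ 1 := by omega
  by_cases hp1 : p.1 = 1
  · rw [slidePair, if_pos hp1, mem_interPairs]
    refine ⟨⟨hCC' q hqC, hCC' p hpC⟩, ?_⟩
    simp only [slideArc, if_pos hp1, if_neg hq1]
    omega
  · rw [slidePair, if_neg hp1, mem_interPairs]
    refine ⟨⟨hCC' p hpC, hCC' q hqC⟩, ?_⟩
    simp only [slideArc, if_neg hp1, if_neg hq1]
    omega

lemma unslidePair_mem_interPairs {w' : ℕ → ℤ} (hC' : ∀ q ∈ C', IsArc n w' q)
    (hC'C : ∀ q ∈ C', unslideArc n q ∈ C) {pq : (ℕ × ℕ) × (ℕ × ℕ)} (h : pq ∈ interPairs C') :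
    unslidePair n pq ∈ interPairs C := by
  obtain ⟨p, q⟩ := pq
  obtain ⟨⟨hpC, hqC⟩, hpq⟩ := mem_interPairs.1 h
  obtain ⟨hp_pos, -, -, -⟩ := hC' p hpC
  obtain ⟨-, -, hq_le, -⟩ := hC' q hqC
  have hp2 : p.2 ≠ 2 * n := by omega
  by_cases hq2 : q.2 = 2 * n
  · rw [unslidePair, if_pos hq2, mem_interPairs]
    refine ⟨⟨hC'C q hqC, hC'C p hpC⟩, ?_⟩
    simp only [unslideArc, if_pos hq2, if_neg hp2]
    omega
  · rw [unslidePair, if_neg hq2, mem_interPairs]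
    refine ⟨⟨hC'C p hpC, hC'C q hqC⟩, ?_⟩
    simp only [unslideArc, if_neg hq2, if_neg hp2]
    omega

lemma unslidePair_slidePair (hC : ∀ p ∈ C, IsArc n w p) {pq : (ℕ × ℕ) × (ℕ × ℕ)}
    (h : pq ∈ interPairs C) : unslidePair n (slidePair n pq) = pq := by
  obtain ⟨p, q⟩ := pq
  obtain ⟨⟨hpC, hqC⟩, hpq⟩ := mem_interPairs.1 h
  have hp := hC p hpC
  have hq := hC q hqC
  by_cases hp1 : p.1 = 1
  · have : (slideArc n p).2 = 2 * n := by rw [slideArc, if_pos hp1]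
    rw [slidePair, if_pos hp1, unslidePair, if_pos this, hp.unslideArc_slideArc,
      hq.unslideArc_slideArc]
  · have : (slideArc n q).2 ≠ 2 * n := by
      have := hp.1
      have := hq.2.2.1
      rw [slideArc, if_neg (by omega)]
      dsimp only
      omega
    rw [slidePair, if_neg hp1, unslidePair, if_neg this, hp.unslideArc_slideArc,
      hq.unslideArc_slideArc]

lemma slidePair_unslidePair {w' : ℕ → ℤ} (hC' : ∀ q ∈ C', IsArc n w' q)
    {pq : (ℕ × ℕ) × (ℕ × ℕ)} (h : pq ∈ interPairs C') : slidePair n (unslidePair n pq) = pq := by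
  obtain ⟨p, q⟩ := pq
  obtain ⟨⟨hpC, hqC⟩, hpq⟩ := mem_interPairs.1 h
  have hp := hC' p hpC
  have hq := hC' q hqC
  by_cases hq2 : q.2 = 2 * n
  · have : (unslideArc n q).1 = 1 := by rw [unslideArc, if_pos hq2]
    rw [unslidePair, if_pos hq2, slidePair, if_pos this, hp.slideArc_unslideArc,
      hq.slideArc_unslideArc]
  · have : (unslideArc n p).1 ≠ 1 := by
      have := hp.1
      have := hq.2.2.1
      rw [unslideArc, if_neg (by omega)]
      dsimp only
      omega
    rw [unslidePair, if_neg hq2, slidePair, if_neg this, hp.slideArc_unslideArc,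
      hq.slideArc_unslideArc]

lemma isReducible_slidePair_iff (hC : ∀ p ∈ C, IsArc n w p) {pq : (ℕ × ℕ) × (ℕ × ℕ)}
    (h : pq ∈ interPairs C) : IsReducible w pq ↔ IsReducible (slideWord n w) (slidePair n pq) := by
  obtain ⟨p, q⟩ := pq
  obtain ⟨⟨hpC, hqC⟩, hpq⟩ := mem_interPairs.1 h
  have hp := hC p hpC
  have hq := hC q hqC
  have hq1 : q.1 ≠ 1 := by have := hp.1; omega
  by_cases hp1 : p.1 = 1
  · rw [slidePair, if_pos hp1, IsReducible, IsReducible, hp.slideWord_slideArc_fst_of_eq_one hp1,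
      hq.slideWord_slideArc_fst_of_ne_one hq1]
    dsimp only
    rw [hp1]
    omega
  · rw [slidePair, if_neg hp1, IsReducible, IsReducible, hp.slideWord_slideArc_fst_of_ne_one hp1,
      hq.slideWord_slideArc_fst_of_ne_one hq1]

lemma IsArcConfig.unslideArc_mem_of_mem_slideConf (hC : IsArcConfig n w C) {q : ℕ × ℕ}
    (hq : q ∈ slideConf n C) : unslideArc n q ∈ C :=
  hC.image_unslideArc_slideConf ▸ mem_image_of_mem _ hq

lemma IsArcConfig.card_interPairs_slideConf (hC : IsArcConfig n w C) :
    (interPairs C).card = (interPairs (slideConf n C)).card :=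
  card_nbij' (slidePair n) (unslidePair n)
    (fun _ => slidePair_mem_interPairs hC.1 fun _ => mem_image_of_mem _)
    (fun _ => unslidePair_mem_interPairs hC.slide.1 fun _ => hC.unslideArc_mem_of_mem_slideConf)
    (fun _ => unslidePair_slidePair hC.1) (fun _ => slidePair_unslidePair hC.slide.1)

lemma IsArcConfig.card_redPairs_slideConf (hC : IsArcConfig n w C) :
    (redPairs w C).card = (redPairs (slideWord n w) (slideConf n C)).card := by
  rw [redPairs_eq_filter, redPairs_eq_filter]
  exact card_filter_eq_of_invOn (slidePair n) (unslidePair n)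
    (fun _ => slidePair_mem_interPairs hC.1 fun _ => mem_image_of_mem _)
    (fun _ => unslidePair_mem_interPairs hC.slide.1 fun _ => hC.unslideArc_mem_of_mem_slideConf)
    (fun _ => unslidePair_slidePair hC.1) (fun _ => slidePair_unslidePair hC.slide.1)
    fun _ => isReducible_slidePair_iff hC.1

end Slide

/-- The slide map is a bijection from arc configurations of `w` to arc configurations of
`s(w)` preserving the number of intersecting pairs of arcs and the number of reducible
intersecting pairs; in particular it maps irreducible configurations to irreducible ones. -/
theorem slideConf_bijection (n : ℕ) (w : ℕ → ℤ) :
    (∀ C, IsArcConfig n w C → IsArcConfig n (slideWord n w) (slideConf n C)) ∧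
    (∀ C', IsArcConfig n (slideWord n w) C' →
      ∃! C, IsArcConfig n w C ∧ slideConf n C = C') ∧
    (∀ C, IsArcConfig n w C →
      (interPairs C).card = (interPairs (slideConf n C)).card ∧
      (redPairs w C).card = (redPairs (slideWord n w) (slideConf n C)).card ∧
      (IsIrreducibleConfig w C → IsIrreducibleConfig (slideWord n w) (slideConf n C))) := by
  refine ⟨fun C hC => hC.slide, fun C' hC' => ?_, fun C hC => ?_⟩
  · refine ⟨C'.image (unslideArc n), ⟨hC'.image_unslideArc, hC'.slideConf_image_unslideArc⟩, ?_⟩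
    rintro C ⟨hC, rfl⟩
    exact hC.image_unslideArc_slideConf.symm
  · have hred := hC.card_redPairs_slideConf
    refine ⟨hC.card_interPairs_slideConf, hred, fun hirr => ?_⟩
    rwa [← redPairs_eq_empty_iff, ← card_eq_zero, ← hred, card_eq_zero, redPairs_eq_empty_iff]
end

section
/- Let w = (a_1, ..., a_{2n}) be a sequence of integers. If C1 and C2 are arc configurations of w in which no two intersecting arcs have the same color, and the sets of left endpoints of C1 and C2 coincide, then C1 = C2. -/
lemma nconf_step (n : ℕ) (w : ℕ → ℤ) (C1 C2 : Finset (ℕ × ℕ))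
    (h1 : IsArcConfig n w C1) (h2 : IsArcConfig n w C2)
    (hnc1 : ∀ p ∈ C1, ∀ q ∈ C1, Crossing p q → w p.1 ≠ w q.1)
    (hnc2 : ∀ p ∈ C2, ∀ q ∈ C2, Crossing p q → w p.1 ≠ w q.1)
    (h : C1.image Prod.fst = C2.image Prod.fst)
    (j : ℕ) (IH12 : ∀ q ∈ C1, q.2 < j → q ∈ C2) (IH21 : ∀ q ∈ C2, q.2 < j → q ∈ C1)
    (p : ℕ × ℕ) (hp : p ∈ C1) (hpj : p.2 = j) : p ∈ C2 := by
  obtain ⟨i, j₀⟩ := p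
  simp only at hpj
  subst j₀
  -- basic facts about the arc (i, j)
  obtain ⟨hi1, hij, hj2n, hcol⟩ := h1.1 _ hp
  simp only at hi1 hij hj2n hcol
  have hj1 : 1 ≤ j := le_trans hi1 hij.le
  -- the unique arc covering j in C1 is (i, j)
  obtain ⟨u1, hu1, hu1uniq⟩ := h1.2 j hj1 hj2n
  have hu1eq : u1 = (i, j) := (hu1uniq (i, j) ⟨hp, Or.inr rfl⟩).symm
  -- the arc covering j in C2
  obtain ⟨q, ⟨hqC2, hqcov⟩, hquniq⟩ := h2.2 j hj1 hj2n
  have hq2 : q.2 = j := by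
    rcases hqcov with hq1 | hq2
    · -- q.1 = j : then j is a left endpoint, contradiction
      exfalso
      have hjim : j ∈ C2.image Prod.fst := Finset.mem_image.mpr ⟨q, hqC2, hq1⟩
      rw [← h] at hjim
      obtain ⟨r, hrC1, hr1⟩ := Finset.mem_image.mp hjim
      have := hu1uniq r ⟨hrC1, Or.inl hr1⟩
      rw [hu1eq] at this
      have : i = j := by rw [← hr1, this]
      omega
    · exact hq2
  -- q = (q.1, j) ∈ C2
  by_cases hii : q.1 = i
  · have : q = (i, j) := by
      ext
      · exact hii
      · exact hq2
    rwa [← this]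
  · exfalso
    obtain ⟨_, hq12, _, hqcol⟩ := h2.1 q hqC2
    have hcoleq : w q.1 = w i := by
      rw [hq2] at hqcol; omega
    -- the arc in C2 with left endpoint i
    have hiim : i ∈ C2.image Prod.fst := by
      rw [← h]; exact Finset.mem_image.mpr ⟨(i, j), hp, rfl⟩
    obtain ⟨r, hrC2, hr1⟩ := Finset.mem_image.mp hiim
    obtain ⟨_, hr12, _, _⟩ := h2.1 r hrC2
    have hr2ne : r.2 ≠ j := by
      intro hr2
      have := hquniq r ⟨hrC2, Or.inr hr2⟩
      rw [this] at hr1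
      exact hii hr1
    have hr2gt : j < r.2 := by
      rcases lt_or_ge j r.2 with hlt | hge
      · exact hlt
      · exfalso
        have hr2lt : r.2 < j := lt_of_le_of_ne hge hr2ne
        have hrC1 := IH21 r hrC2 hr2lt
        obtain ⟨u, hu, huuniq⟩ := h1.2 i hi1 (le_trans (le_of_lt (lt_of_lt_of_le hij hj2n)) le_rfl |>.trans' (by omega))
        have e1 := huuniq (i, j) ⟨hp, Or.inl rfl⟩
        have e2 := huuniq r ⟨hrC1, Or.inl hr1⟩
        rw [← e2] at e1
        exact hr2ne (congrArg Prod.snd e1.symm)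
    -- the arc in C1 with left endpoint q.1
    have hqim : q.1 ∈ C1.image Prod.fst := by
      rw [h]; exact Finset.mem_image.mpr ⟨q, hqC2, rfl⟩
    obtain ⟨s, hsC1, hs1⟩ := Finset.mem_image.mp hqim
    obtain ⟨_, hs12, _, _⟩ := h1.1 s hsC1
    have hs2ne : s.2 ≠ j := by
      intro hs2
      have := hu1uniq s ⟨hsC1, Or.inr hs2⟩
      rw [hu1eq] at this
      rw [this] at hs1
      exact hii hs1.symm
    have hs2gt : j < s.2 := by
      rcases lt_or_ge j s.2 with hlt | hge
      · exact hlt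
      · exfalso
        have hs2lt : s.2 < j := lt_of_le_of_ne hge hs2ne
        have hsC2 := IH12 s hsC1 hs2lt
        obtain ⟨u2, hu2, hu2uniq⟩ := h2.2 q.1 (h2.1 q hqC2).1 (by omega)
        have e1 := hu2uniq q ⟨hqC2, Or.inl rfl⟩
        have e2 := hu2uniq s ⟨hsC2, Or.inl hs1⟩
        rw [← e1] at e2
        have : s.2 = j := by rw [congrArg Prod.snd e2]; exact hq2
        exact hs2ne this
    -- now the crossing contradictions
    rcases lt_or_gt_of_ne hii with hlt | hgt
    · -- q.1 < i : arcs q = (q.1, j) and r = (i, r.2) in C2 cross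
      have hcross : Crossing q r := by
        left
        refine ⟨by omega, by omega, by omega⟩
      exact hnc2 q hqC2 r hrC2 hcross (by rw [hr1]; exact hcoleq)
    · -- i < q.1 : arcs (i, j) and s = (q.1, s.2) in C1 cross
      have hcross : Crossing (i, j) s := by
        left
        refine ⟨by simpa [hs1] using hgt, by omega, by omega⟩
      exact hnc1 (i, j) hp s hsC1 hcross (by simp only; rw [hs1]; exact hcoleq.symm)

/-- An arc configuration in which no two intersecting arcs have the same color (the color of
an arc `(i,j)` being `w i + 1`) is uniquely determined by its set of left endpoints. -/
theorem nconf_determined_by_left_ends (n : ℕ) (w : ℕ → ℤ) (C1 C2 : Finset (ℕ × ℕ))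
    (h1 : IsArcConfig n w C1) (h2 : IsArcConfig n w C2)
    (hnc1 : ∀ p ∈ C1, ∀ q ∈ C1, Crossing p q → w p.1 ≠ w q.1)
    (hnc2 : ∀ p ∈ C2, ∀ q ∈ C2, Crossing p q → w p.1 ≠ w q.1)
    (h : C1.image Prod.fst = C2.image Prod.fst) : C1 = C2 := by
  have key : ∀ j : ℕ, (∀ p ∈ C1, p.2 < j → p ∈ C2) ∧ (∀ p ∈ C2, p.2 < j → p ∈ C1) := by
    intro j
    induction j using Nat.strong_induction_on with
    | _ j IH =>
      constructor
      · intro p hp hpj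
        exact nconf_step n w C1 C2 h1 h2 hnc1 hnc2 h p.2
          (fun q hq hq2 => (IH p.2 hpj).1 q hq hq2)
          (fun q hq hq2 => (IH p.2 hpj).2 q hq hq2) p hp rfl
      · intro p hp hpj
        exact nconf_step n w C2 C1 h2 h1 hnc2 hnc1 h.symm p.2
          (fun q hq hq2 => (IH p.2 hpj).2 q hq hq2)
          (fun q hq hq2 => (IH p.2 hpj).1 q hq hq2) p hp rfl
  ext p
  constructor
  · intro hp
    exact (key (p.2 + 1)).1 p hp (Nat.lt_succ_self _)
  · intro hp
    exact (key (p.2 + 1)).2 p hp (Nat.lt_succ_self _)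
end

section
/- For all integers n, l ≥ 0, let w be the sequence obtained by concatenating l copies of (0, 2), then the single letter 0, then n copies of (2, 4), then the single letter 2 (a sequence of length 2(l+n+1)). Then the number of noncrossing arc configurations of w equals binom(n + l, n). -/
/-- `C` is an arc configuration of the word `w = (w 1, ..., w m)`: a finite set of pairs
`(i, j)` with `1 ≤ i < j ≤ m` and `w j = w i + 2`, whose endpoints partition `{1, ..., m}`. -/
def IsArcConfigOn (m : ℕ) (w : ℕ → ℤ) (C : Finset (ℕ × ℕ)) : Prop :=
  (∀ p ∈ C, 1 ≤ p.1 ∧ p.1 < p.2 ∧ p.2 ≤ m ∧ w p.2 = w p.1 + 2) ∧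
  ∀ k, 1 ≤ k → k ≤ m → ∃! p, p ∈ C ∧ (p.1 = k ∨ p.2 = k)

/-- The word `(02)^l 0 (24)^n 2` of length `2(l+n+1)`: position `k ≤ 2l+1` carries `0` if `k`
is odd and `2` if `k` is even; position `k > 2l+1` carries `2` if `k` is even and `4` if `k`
is odd. -/
def wln (l : ℕ) : ℕ → ℤ :=
  fun k => if k ≤ 2 * l + 1 then (if k % 2 = 1 then 0 else 2) else (if k % 2 = 0 then 2 else 4)



/-- noncrossing matching of `P` with opener set `F`. -/
def NCM (P F : Finset ℕ) (C : Finset (ℕ × ℕ)) : Prop :=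
  (∀ p ∈ C, p.1 ∈ F ∧ p.2 ∈ P ∧ p.2 ∉ F ∧ p.1 < p.2) ∧
  (∀ k ∈ P, ∃! p, p ∈ C ∧ (p.1 = k ∨ p.2 = k)) ∧
  (∀ p ∈ C, ∀ q ∈ C, ¬ Crossing p q)

lemma ncm_first_mem {P F : Finset ℕ} {C : Finset (ℕ × ℕ)} (h : NCM P F C) (hFP : F ⊆ P)
    {k : ℕ} (hk : k ∈ F) : ∃ p ∈ C, p.1 = k := by
  obtain ⟨p, ⟨hpC, hp⟩, -⟩ := h.2.1 k (hFP hk)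
  rcases hp with h1 | h2
  · exact ⟨p, hpC, h1⟩
  · exact absurd (h2 ▸ hk) ((h.1 p hpC).2.2.1)

lemma ncm_image_fst {P F : Finset ℕ} {C : Finset (ℕ × ℕ)} (h : NCM P F C) (hFP : F ⊆ P) :
    C.image Prod.fst = F := by
  apply Finset.Subset.antisymm
  · intro k hk
    obtain ⟨p, hp, rfl⟩ := Finset.mem_image.1 hk
    exact (h.1 p hp).1
  · intro k hk
    obtain ⟨p, hp, hk'⟩ := ncm_first_mem h hFP hk
    exact Finset.mem_image.2 ⟨p, hp, hk'⟩

lemma ncm_inj_fst {P F : Finset ℕ} {C : Finset (ℕ × ℕ)} (h : NCM P F C) (hFP : F ⊆ P)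
    {p q : ℕ × ℕ} (hp : p ∈ C) (hq : q ∈ C) (hk : p.1 = q.1 ∨ p.1 = q.2 ∨ p.2 = q.1 ∨ p.2 = q.2) :
    p = q := by
  have hmem : ∀ r ∈ C, r.1 ∈ P ∧ r.2 ∈ P := fun r hr => ⟨hFP (h.1 r hr).1, (h.1 r hr).2.1⟩
  rcases hk with e | e | e | e
  · obtain ⟨r, -, hu⟩ := h.2.1 q.1 (hmem q hq).1
    exact (hu p ⟨hp, Or.inl e⟩).trans (hu q ⟨hq, Or.inl rfl⟩).symm
  · obtain ⟨r, -, hu⟩ := h.2.1 q.2 (hmem q hq).2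
    exact (hu p ⟨hp, Or.inl e⟩).trans (hu q ⟨hq, Or.inr rfl⟩).symm
  · obtain ⟨r, -, hu⟩ := h.2.1 q.1 (hmem q hq).1
    exact (hu p ⟨hp, Or.inr e⟩).trans (hu q ⟨hq, Or.inl rfl⟩).symm
  · obtain ⟨r, -, hu⟩ := h.2.1 q.2 (hmem q hq).2
    exact (hu p ⟨hp, Or.inr e⟩).trans (hu q ⟨hq, Or.inr rfl⟩).symm

lemma ncm_card {P F : Finset ℕ} {C : Finset (ℕ × ℕ)} (h : NCM P F C) (hFP : F ⊆ P) :
    P.card = 2 * C.card := by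
  have hP : P = C.biUnion (fun p => {p.1, p.2}) := by
    apply Finset.Subset.antisymm
    · intro k hk
      obtain ⟨p, ⟨hpC, hp⟩, -⟩ := h.2.1 k hk
      refine Finset.mem_biUnion.2 ⟨p, hpC, ?_⟩
      rcases hp with rfl | rfl <;> simp
    · intro k hk
      obtain ⟨p, hp, hk⟩ := Finset.mem_biUnion.1 hk
      rcases Finset.mem_insert.1 hk with rfl | hk
      · exact hFP (h.1 p hp).1
      · rw [Finset.mem_singleton.1 hk]; exact (h.1 p hp).2.1
  rw [hP, Finset.card_biUnion, Finset.sum_congr rfl (fun p hp => ?_), Finset.sum_const,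
    smul_eq_mul, mul_comm]
  · exact Finset.card_pair (Nat.ne_of_lt (h.1 p hp).2.2.2)
  · intro p hp q hq hne
    simp only [Finset.disjoint_left, Finset.mem_insert, Finset.mem_singleton]
    rintro a (rfl | rfl) hb <;>
    · apply hne
      rcases hb with e | e
      · exact ncm_inj_fst h hFP hp hq (by tauto)
      · exact ncm_inj_fst h hFP hp hq (by tauto)


lemma ncm_erase {P F : Finset ℕ} {C : Finset (ℕ × ℕ)} (h : NCM P F C) (hFP : F ⊆ P)
    {i j : ℕ} (hij : (i, j) ∈ C) :
    NCM ((P.erase i).erase j) (F.erase i) (C.erase (i, j)) := by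
  have hiF : i ∈ F := (h.1 _ hij).1
  have hjP : j ∈ P := (h.1 _ hij).2.1
  have hjF : j ∉ F := (h.1 _ hij).2.2.1
  have key : ∀ p ∈ C, p ≠ (i, j) → p.1 ≠ i ∧ p.1 ≠ j ∧ p.2 ≠ i ∧ p.2 ≠ j := by
    intro p hp hne
    refine ⟨?_, ?_, ?_, ?_⟩ <;> intro e
    · exact hne (ncm_inj_fst h hFP hp hij (by simp [e]))
    · exact hjF (e ▸ (h.1 p hp).1)
    · exact (h.1 p hp).2.2.1 (e ▸ hiF)
    · exact hne (ncm_inj_fst h hFP hp hij (by simp [e]))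
  refine ⟨?_, ?_, ?_⟩
  · intro p hp
    obtain ⟨hne, hpC⟩ := Finset.mem_erase.1 hp
    have hk := key p hpC hne
    obtain ⟨h1, h2, h3, h4⟩ := h.1 p hpC
    exact ⟨Finset.mem_erase.2 ⟨hk.1, h1⟩,
      Finset.mem_erase.2 ⟨hk.2.2.2, Finset.mem_erase.2 ⟨hk.2.2.1, h2⟩⟩,
      fun hm => h3 (Finset.mem_of_mem_erase hm), h4⟩
  · intro k hk
    obtain ⟨hkj, hki, hkP⟩ : k ≠ j ∧ k ≠ i ∧ k ∈ P := by
      obtain ⟨a, b⟩ := Finset.mem_erase.1 hk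
      exact ⟨a, (Finset.mem_erase.1 b).1, (Finset.mem_erase.1 b).2⟩
    obtain ⟨p, ⟨hpC, hpk⟩, hu⟩ := h.2.1 k hkP
    have hpne : p ≠ (i, j) := by
      rintro rfl
      rcases hpk with e | e
      · exact hki e.symm
      · exact hkj e.symm
    refine ⟨p, ⟨Finset.mem_erase.2 ⟨hpne, hpC⟩, hpk⟩, ?_⟩
    rintro q ⟨hqC, hqk⟩
    exact hu q ⟨Finset.mem_of_mem_erase hqC, hqk⟩
  · intro p hp q hq
    exact h.2.2 p (Finset.mem_of_mem_erase hp) q (Finset.mem_of_mem_erase hq)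

lemma ncm_unique : ∀ (N : ℕ) (P F : Finset ℕ) (C₁ C₂ : Finset (ℕ × ℕ)), P.card ≤ N → F ⊆ P →
    NCM P F C₁ → NCM P F C₂ → C₁ = C₂ := by
  intro N
  induction N with
  | zero =>
    intro P F C₁ C₂ hN hFP h1 h2
    have hP : P = ∅ := Finset.card_eq_zero.1 (Nat.le_zero.1 hN)
    have he : ∀ C, NCM P F C → C = ∅ := by
      intro C hC
      refine Finset.eq_empty_of_forall_notMem fun p hp => ?_
      have := hFP (hC.1 p hp).1
      simp [hP] at this
    rw [he C₁ h1, he C₂ h2]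
  | succ N ih =>
    intro P F C₁ C₂ hN hFP h1 h2
    rcases eq_or_ne P ∅ with rfl | hPne
    · have he : ∀ C, NCM (∅ : Finset ℕ) F C → C = ∅ := by
        intro C hC
        refine Finset.eq_empty_of_forall_notMem fun p hp => ?_
        have := hFP (hC.1 p hp).1
        simp at this
      rw [he C₁ h1, he C₂ h2]
    · -- T nonempty
      obtain ⟨k, hk⟩ := Finset.nonempty_iff_ne_empty.2 hPne
      have hTne : (P \ F).Nonempty := by
        obtain ⟨p, ⟨hpC, -⟩, -⟩ := h1.2.1 k hk
        exact ⟨p.2, Finset.mem_sdiff.2 ⟨(h1.1 p hpC).2.1, (h1.1 p hpC).2.2.1⟩⟩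
      set j := (P \ F).min' hTne with hjdef
      have hjT : j ∈ P \ F := (P \ F).min'_mem hTne
      have hjP : j ∈ P := (Finset.mem_sdiff.1 hjT).1
      have hjF : j ∉ F := (Finset.mem_sdiff.1 hjT).2
      -- in any NCM, the arc at j is (max of P below j, j)
      have harc : ∀ C, NCM P F C → ∀ p ∈ C, (p.1 = j ∨ p.2 = j) →
          ∃ (hne : (P.filter (· < j)).Nonempty), p = ((P.filter (· < j)).max' hne, j) := by
        intro C hC p hp hpj
        have hp2 : p.2 = j := by
          rcases hpj with e | e
          · exact absurd (e ▸ (hC.1 p hp).1) hjF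
          · exact e
        have hne : (P.filter (· < j)).Nonempty :=
          ⟨p.1, Finset.mem_filter.2 ⟨hFP (hC.1 p hp).1, hp2 ▸ (hC.1 p hp).2.2.2⟩⟩
        refine ⟨hne, ?_⟩
        set i := (P.filter (· < j)).max' hne with hidef
        have hiP : i ∈ P := (Finset.mem_filter.1 ((P.filter (· < j)).max'_mem hne)).1
        have hilt : i < j := (Finset.mem_filter.1 ((P.filter (· < j)).max'_mem hne)).2
        have hp1le : p.1 ≤ i := Finset.le_max' _ _
          (Finset.mem_filter.2 ⟨hFP (hC.1 p hp).1, hp2 ▸ (hC.1 p hp).2.2.2⟩)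
        rcases eq_or_lt_of_le hp1le with e | hlt
        · exact Prod.ext e hp2
        · exfalso
          have hiF : i ∈ F := by
            by_contra hiF
            exact absurd (Finset.min'_le _ _ (Finset.mem_sdiff.2 ⟨hiP, hiF⟩)) (by omega)
          obtain ⟨q, hqC, hq1⟩ := ncm_first_mem hC hFP hiF
          have hq2 : q.2 ∈ P \ F := Finset.mem_sdiff.2 ⟨(hC.1 q hqC).2.1, (hC.1 q hqC).2.2.1⟩
          have hq2j : j ≤ q.2 := Finset.min'_le _ _ hq2
          have hq2j' : q.2 ≠ j := by
            intro e
            have := ncm_inj_fst hC hFP hqC hp (Or.inr (Or.inr (Or.inr (by omega))))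
            rw [this] at hq1
            omega
          exact hC.2.2 p hp q hqC (Or.inl ⟨by omega, by omega, by omega⟩)
      -- both configs contain the arc (i, j)
      obtain ⟨q₁, ⟨hq1C, hq1j⟩, -⟩ := h1.2.1 j hjP
      obtain ⟨q₂, ⟨hq2C, hq2j⟩, -⟩ := h2.2.1 j hjP
      obtain ⟨hne, he1⟩ := harc C₁ h1 q₁ hq1C hq1j
      obtain ⟨hne2, he2⟩ := harc C₂ h2 q₂ hq2C hq2j
      set i := (P.filter (· < j)).max' hne
      subst he1
      rw [he2] at hq2C
      have hiP : i ∈ P := (Finset.mem_filter.1 ((P.filter (· < j)).max'_mem hne)).1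
      have hilt : i < j := (Finset.mem_filter.1 ((P.filter (· < j)).max'_mem hne)).2
      have hcard : ((P.erase i).erase j).card ≤ N := by
        have h1 : j ∈ P.erase i := Finset.mem_erase.2 ⟨by omega, hjP⟩
        have := Finset.card_erase_of_mem h1
        have := Finset.card_erase_of_mem hiP
        have := Finset.card_pos.2 ⟨i, hiP⟩
        omega
      have hFP' : F.erase i ⊆ (P.erase i).erase j := by
        intro x hx
        obtain ⟨hxi, hxF⟩ := Finset.mem_erase.1 hx
        exact Finset.mem_erase.2 ⟨fun e => hjF (e ▸ hxF), Finset.mem_erase.2 ⟨hxi, hFP hxF⟩⟩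
      have := ih _ _ _ _ hcard hFP' (ncm_erase h1 hFP hq1C) (ncm_erase h2 hFP hq2C)
      have e1 : C₁ = insert (i, j) (C₁.erase (i, j)) := (Finset.insert_erase hq1C).symm
      have e2 : C₂ = insert (i, j) (C₂.erase (i, j)) := (Finset.insert_erase hq2C).symm
      rw [e1, e2, this]


lemma ncm_exists : ∀ (N : ℕ) (P F : Finset ℕ), P.card ≤ N → F ⊆ P → 2 * F.card = P.card →
    (∀ k, ((P \ F).filter (· < k)).card ≤ (F.filter (· < k)).card) → ∃ C, NCM P F C := by
  intro N
  induction N with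
  | zero =>
    intro P F hN _ _ _
    have hP : P = ∅ := Finset.card_eq_zero.1 (Nat.le_zero.1 hN)
    exact ⟨∅, by simp [NCM, hP]⟩
  | succ N ih =>
    intro P F hN hFP htot hbal
    rcases eq_or_ne P ∅ with rfl | hPne
    · exact ⟨∅, by simp [NCM]⟩
    have hTne : (P \ F).Nonempty := by
      rw [Finset.sdiff_nonempty]
      intro hPF
      have hPF' : P = F := Finset.Subset.antisymm hPF hFP
      have hc : P.card = 0 := by rw [hPF'] at htot ⊢; omega
      exact hPne (Finset.card_eq_zero.1 hc)
    set T := P \ F with hTdef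
    set j := T.min' hTne with hjdef
    have hjT : j ∈ T := T.min'_mem hTne
    have hjP : j ∈ P := (Finset.mem_sdiff.1 hjT).1
    have hjF : j ∉ F := (Finset.mem_sdiff.1 hjT).2
    have hFne : (F.filter (· < j)).Nonempty := by
      have h1 : j ∈ T.filter (· < j + 1) := Finset.mem_filter.2 ⟨hjT, by omega⟩
      have h2 := hbal (j + 1)
      have h3 : (F.filter (· < j + 1)).Nonempty := by
        rw [← Finset.card_pos]
        calc 0 < (T.filter (· < j + 1)).card := Finset.card_pos.2 ⟨j, h1⟩
          _ ≤ _ := h2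
      obtain ⟨x, hx⟩ := h3
      obtain ⟨hxF, hxlt⟩ := Finset.mem_filter.1 hx
      refine ⟨x, Finset.mem_filter.2 ⟨hxF, ?_⟩⟩
      have : x ≠ j := fun e => hjF (e ▸ hxF)
      omega
    set i := (F.filter (· < j)).max' hFne with hidef
    have hiF : i ∈ F := (Finset.mem_filter.1 ((F.filter (· < j)).max'_mem hFne)).1
    have hiP : i ∈ P := hFP hiF
    have hij : i < j := (Finset.mem_filter.1 ((F.filter (· < j)).max'_mem hFne)).2
    -- no element of P strictly between i and j
    have hgap : ∀ x ∈ P, i < x → x < j → False := by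
      intro x hxP hix hxj
      have hxF : x ∈ F := by
        by_contra hxF
        have hjx : j ≤ x := Finset.min'_le T x (Finset.mem_sdiff.2 ⟨hxP, hxF⟩)
        omega
      have hxi : x ≤ i := Finset.le_max' (F.filter (· < j)) x (Finset.mem_filter.2 ⟨hxF, hxj⟩)
      omega
    set P' := (P.erase i).erase j with hP'def
    set F' := F.erase i with hF'def
    have hmemP' : ∀ x, x ∈ P' ↔ x ∈ P ∧ x ≠ i ∧ x ≠ j := by
      intro x; simp [hP'def, Finset.mem_erase]; tauto
    have hFP' : F' ⊆ P' := by
      intro x hx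
      obtain ⟨hxi, hxF⟩ := Finset.mem_erase.1 hx
      exact (hmemP' x).2 ⟨hFP hxF, hxi, fun e => hjF (e ▸ hxF)⟩
    have hcard : P'.card = P.card - 2 := by
      rw [hP'def]
      have h1 : j ∈ P.erase i := Finset.mem_erase.2 ⟨by omega, hjP⟩
      have := Finset.card_erase_of_mem h1
      have := Finset.card_erase_of_mem hiP
      omega
    have hcardF : F'.card = F.card - 1 := Finset.card_erase_of_mem hiF
    have hFpos : 0 < F.card := Finset.card_pos.2 ⟨i, hiF⟩
    have hPpos : 2 ≤ P.card := by omega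
    have hT' : P' \ F' = T.erase j := by
      ext x
      simp only [Finset.mem_sdiff, hmemP', Finset.mem_erase, hF'def, hTdef]
      constructor
      · rintro ⟨⟨hxP, hxi, hxj⟩, hxF⟩
        exact ⟨hxj, hxP, fun h => hxF ⟨hxi, h⟩⟩
      · rintro ⟨hxj, hxP, hxF⟩
        exact ⟨⟨hxP, fun e => hxF (e ▸ hiF), hxj⟩, fun h => hxF h.2⟩
    have hbal' : ∀ k, ((P' \ F').filter (· < k)).card ≤ (F'.filter (· < k)).card := by
      intro k
      rw [hT']
      rcases le_or_gt k i with hk | hk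
      · -- k ≤ i : nothing changes
        have e1 : (T.erase j).filter (· < k) = T.filter (· < k) := by
          ext x; simp only [Finset.mem_filter, Finset.mem_erase]
          constructor
          · rintro ⟨⟨-, a⟩, b⟩; exact ⟨a, b⟩
          · rintro ⟨a, b⟩; exact ⟨⟨by omega, a⟩, b⟩
        have e2 : F'.filter (· < k) = F.filter (· < k) := by
          ext x; simp only [Finset.mem_filter, Finset.mem_erase, hF'def]
          constructor
          · rintro ⟨⟨-, a⟩, b⟩; exact ⟨a, b⟩
          · rintro ⟨a, b⟩; exact ⟨⟨by omega, a⟩, b⟩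
        rw [e1, e2]; exact hbal k
      rcases le_or_gt k j with hk2 | hk2
      · -- i < k ≤ j
        have e1 : (T.erase j).filter (· < k) = T.filter (· < i) := by
          ext x; simp only [Finset.mem_filter, Finset.mem_erase]
          constructor
          · rintro ⟨⟨hxj, hxT⟩, hxk⟩
            refine ⟨hxT, ?_⟩
            have hxP : x ∈ P := (Finset.mem_sdiff.1 hxT).1
            have hxF : x ∉ F := (Finset.mem_sdiff.1 hxT).2
            have : x ≠ i := fun e => hxF (e ▸ hiF)
            by_contra h
            exact hgap x hxP (by omega) (by omega)
          · rintro ⟨hxT, hxi⟩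
            exact ⟨⟨by omega, hxT⟩, by omega⟩
        have e2 : (F.filter (· < i)).card + 1 ≤ (F'.filter (· < k)).card + 1 := by
          have : insert i (F.filter (· < i)) ⊆ insert i (F'.filter (· < k)) := by
            intro x hx
            rcases Finset.mem_insert.1 hx with rfl | hx
            · exact Finset.mem_insert_self _ _
            · obtain ⟨hxF, hxi⟩ := Finset.mem_filter.1 hx
              exact Finset.mem_insert.2 (Or.inr (Finset.mem_filter.2
                ⟨Finset.mem_erase.2 ⟨by omega, hxF⟩, by omega⟩))
          have h1 := Finset.card_le_card this
          have c1 : (insert i (F.filter (· < i))).card = (F.filter (· < i)).card + 1 :=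
            Finset.card_insert_of_notMem (by simp)
          have c2 : (insert i (F'.filter (· < k))).card = (F'.filter (· < k)).card + 1 :=
            Finset.card_insert_of_notMem (by simp [hF'def])
          omega
        rw [e1]
        have := hbal i
        omega
      · -- j < k
        have e1 : ((T.erase j).filter (· < k)).card = (T.filter (· < k)).card - 1 := by
          have : (T.erase j).filter (· < k) = (T.filter (· < k)).erase j := by
            ext x; simp only [Finset.mem_filter, Finset.mem_erase]; tauto
          rw [this, Finset.card_erase_of_mem (Finset.mem_filter.2 ⟨hjT, by omega⟩)]
        have e2 : (F'.filter (· < k)).card = (F.filter (· < k)).card - 1 := by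
          have : F'.filter (· < k) = (F.filter (· < k)).erase i := by
            ext x; simp only [Finset.mem_filter, Finset.mem_erase, hF'def]; tauto
          rw [this, Finset.card_erase_of_mem (Finset.mem_filter.2 ⟨hiF, by omega⟩)]
        have hjmem : j ∈ T.filter (· < k) := Finset.mem_filter.2 ⟨hjT, by omega⟩
        have himem : i ∈ F.filter (· < k) := Finset.mem_filter.2 ⟨hiF, by omega⟩
        have p1 : 0 < (T.filter (· < k)).card := Finset.card_pos.2 ⟨j, hjmem⟩
        have p2 : 0 < (F.filter (· < k)).card := Finset.card_pos.2 ⟨i, himem⟩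
        have := hbal k
        omega
    obtain ⟨C', hC'⟩ := ih P' F' (by omega) hFP' (by omega) hbal'
    refine ⟨insert (i, j) C', ?_, ?_, ?_⟩
    · intro p hp
      rcases Finset.mem_insert.1 hp with rfl | hp
      · exact ⟨hiF, hjP, hjF, hij⟩
      · obtain ⟨h1, h2, h3, h4⟩ := hC'.1 p hp
        refine ⟨Finset.mem_of_mem_erase h1, ((hmemP' p.2).1 h2).1, fun hm => ?_, h4⟩
        have : p.2 ≠ i := ((hmemP' p.2).1 h2).2.1
        exact h3 (Finset.mem_erase.2 ⟨this, hm⟩)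
    · intro k hkP
      have hC'endpoints : ∀ p ∈ C', p.1 ≠ i ∧ p.1 ≠ j ∧ p.2 ≠ i ∧ p.2 ≠ j := by
        intro p hp
        obtain ⟨h1, h2, -, -⟩ := hC'.1 p hp
        have e1 := (hmemP' p.1).1 (hFP' h1)
        have e2 := (hmemP' p.2).1 h2
        exact ⟨e1.2.1, e1.2.2, e2.2.1, e2.2.2⟩
      rcases eq_or_ne k i with rfl | hki
      · refine ⟨(i, j), ⟨Finset.mem_insert_self _ _, Or.inl rfl⟩, ?_⟩
        rintro q ⟨hq, hqk⟩
        rcases Finset.mem_insert.1 hq with rfl | hq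
        · rfl
        · obtain ⟨a, b, c, d⟩ := hC'endpoints q hq
          rcases hqk with e | e <;> omega
      rcases eq_or_ne k j with rfl | hkj
      · refine ⟨(i, j), ⟨Finset.mem_insert_self _ _, Or.inr rfl⟩, ?_⟩
        rintro q ⟨hq, hqk⟩
        rcases Finset.mem_insert.1 hq with rfl | hq
        · rfl
        · obtain ⟨a, b, c, d⟩ := hC'endpoints q hq
          rcases hqk with e | e <;> omega
      · obtain ⟨p, ⟨hpC, hpk⟩, hu⟩ := hC'.2.1 k ((hmemP' k).2 ⟨hkP, hki, hkj⟩)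
        refine ⟨p, ⟨Finset.mem_insert.2 (Or.inr hpC), hpk⟩, ?_⟩
        rintro q ⟨hq, hqk⟩
        rcases Finset.mem_insert.1 hq with rfl | hq
        · exfalso; rcases hqk with e | e
          · exact hki e.symm
          · exact hkj e.symm
        · exact hu q ⟨hq, hqk⟩
    · have hout : ∀ p ∈ C', (p.1 < i ∨ j < p.1) ∧ (p.2 < i ∨ j < p.2) := by
        intro p hp
        obtain ⟨h1, h2, -, -⟩ := hC'.1 p hp
        have e1 := (hmemP' p.1).1 (hFP' h1)
        have e2 := (hmemP' p.2).1 h2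
        constructor
        · rcases lt_trichotomy p.1 i with h | h | h
          · exact Or.inl h
          · exact (e1.2.1 h).elim
          · rcases lt_trichotomy p.1 j with h' | h' | h'
            · exact (hgap p.1 e1.1 h h').elim
            · exact (e1.2.2 h').elim
            · exact Or.inr h'
        · rcases lt_trichotomy p.2 i with h | h | h
          · exact Or.inl h
          · exact (e2.2.1 h).elim
          · rcases lt_trichotomy p.2 j with h' | h' | h'
            · exact (hgap p.2 e2.1 h h').elim
            · exact (e2.2.2 h').elim
            · exact Or.inr h'
      intro p hp q hq
      rcases Finset.mem_insert.1 hp with rfl | hp <;> rcases Finset.mem_insert.1 hq with rfl | hq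
      · rintro (⟨a, b, c⟩ | ⟨a, b, c⟩) <;> omega
      · obtain ⟨a, b⟩ := hout q hq
        rintro (⟨c, d, e⟩ | ⟨c, d, e⟩) <;> omega
      · obtain ⟨a, b⟩ := hout p hp
        rintro (⟨c, d, e⟩ | ⟨c, d, e⟩) <;> omega
      · exact hC'.2.2 p hp q hq


/-- in a noncrossing matching of an interval, every arc has endpoints of opposite parity -/
lemma ncm_parity {m : ℕ} {F : Finset ℕ} {C : Finset (ℕ × ℕ)} (h : NCM (Finset.Icc 1 m) F C)
    (hFP : F ⊆ Finset.Icc 1 m) {p : ℕ × ℕ} (hp : p ∈ C) : p.1 % 2 ≠ p.2 % 2 := by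
  have hp1 : p.1 ∈ Finset.Icc 1 m := hFP (h.1 p hp).1
  have hp2 : p.2 ∈ Finset.Icc 1 m := (h.1 p hp).2.1
  have hlt : p.1 < p.2 := (h.1 p hp).2.2.2
  set D := C.filter (fun q => p.1 < q.1 ∧ q.2 < p.2) with hD
  have hIoo : Finset.Ioo p.1 p.2 = D.biUnion (fun q => {q.1, q.2}) := by
    apply Finset.Subset.antisymm
    · intro k hk
      obtain ⟨hk1, hk2⟩ := Finset.mem_Ioo.1 hk
      have hkP : k ∈ Finset.Icc 1 m := by
        simp only [Finset.mem_Icc] at hp1 hp2 ⊢; omega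
      obtain ⟨q, ⟨hqC, hqk⟩, -⟩ := h.2.1 k hkP
      have hqlt : q.1 < q.2 := (h.1 q hqC).2.2.2
      have hqp : q ≠ p := by
        rintro rfl
        rcases hqk with e | e <;> omega
      refine Finset.mem_biUnion.2 ⟨q, Finset.mem_filter.2 ⟨hqC, ?_⟩, ?_⟩
      · rcases hqk with e | e
        · -- q.1 = k
          constructor
          · omega
          · rcases lt_trichotomy q.2 p.2 with h' | h' | h'
            · exact h'
            · exact absurd (ncm_inj_fst h hFP hqC hp (by omega)) hqp
            · exact ((h.2.2 p hp q hqC) (Or.inl ⟨by omega, by omega, h'⟩)).elim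
        · -- q.2 = k
          constructor
          · rcases lt_trichotomy q.1 p.1 with h' | h' | h'
            · exact (h.2.2 p hp q hqC (Or.inr ⟨h', by omega, by omega⟩)).elim
            · exact absurd (ncm_inj_fst h hFP hqC hp (by omega)) hqp
            · exact h'
          · omega
      · rcases hqk with e | e <;> simp [← e]
    · intro k hk
      obtain ⟨q, hq, hkq⟩ := Finset.mem_biUnion.1 hk
      obtain ⟨hqC, hq1, hq2⟩ := Finset.mem_filter.1 hq |>.imp id (fun x => x)
      have hqlt : q.1 < q.2 := (h.1 q hqC).2.2.2
      simp only [Finset.mem_insert, Finset.mem_singleton] at hkq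
      rcases hkq with rfl | rfl <;> (simp only [Finset.mem_Ioo]; omega)
  have hdisj : ∀ q₁ ∈ D, ∀ q₂ ∈ D, q₁ ≠ q₂ →
      Disjoint ({q₁.1, q₁.2} : Finset ℕ) {q₂.1, q₂.2} := by
    intro q₁ hq₁ q₂ hq₂ hne
    have hq₁C := (Finset.mem_filter.1 hq₁).1
    have hq₂C := (Finset.mem_filter.1 hq₂).1
    simp only [Finset.disjoint_left, Finset.mem_insert, Finset.mem_singleton]
    rintro a (rfl | rfl) hb <;>
    · exact hne (ncm_inj_fst h hFP hq₁C hq₂C (by tauto))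
  have hcards : (Finset.Ioo p.1 p.2).card = 2 * D.card := by
    rw [hIoo, Finset.card_biUnion hdisj]
    rw [Finset.sum_congr rfl (fun q hq => Finset.card_pair
      (Nat.ne_of_lt (h.1 q (Finset.mem_filter.1 hq).1).2.2.2)), Finset.sum_const, smul_eq_mul,
      mul_comm]
  rw [Nat.card_Ioo] at hcards
  omega


lemma wln_odd_le {l k : ℕ} (h1 : k % 2 = 1) (h2 : k ≤ 2 * l + 1) : wln l k = 0 := by
  unfold wln; split_ifs <;> omega
lemma wln_even {l k : ℕ} (h : k % 2 = 0) : wln l k = 2 := by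
  unfold wln; split_ifs <;> omega
lemma wln_odd_gt {l k : ℕ} (h1 : k % 2 = 1) (h2 : 2 * l + 1 < k) : wln l k = 4 := by
  unfold wln; split_ifs <;> omega

/-- dichotomy for arcs of `wln` configurations -/
lemma arc_dichotomy {l n : ℕ} {C : Finset (ℕ × ℕ)}
    (hC : IsArcConfigOn (2 * l + 2 * n + 2) (wln l) C) {p : ℕ × ℕ} (hp : p ∈ C) :
    (p.1 % 2 = 1 ∧ p.1 ≤ 2 * l + 1 ∧ p.2 % 2 = 0) ∨
    (p.1 % 2 = 0 ∧ p.1 ≤ 2 * l + 2 * n ∧ p.2 % 2 = 1 ∧ 2 * l + 1 < p.2) := by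
  obtain ⟨h1, h2, h3, h4⟩ := hC.1 p hp
  rcases Nat.mod_two_eq_zero_or_one p.1 with e1 | e1 <;>
    rcases Nat.mod_two_eq_zero_or_one p.2 with e2 | e2
  · -- both even : w p.1 = 2, w p.2 = 2 : 2 = 4 contradiction
    rw [wln_even e1, wln_even e2] at h4; omega
  · -- p.1 even, p.2 odd: need p.2 > 2l+1
    rcases le_or_gt p.2 (2 * l + 1) with h5 | h5
    · rw [wln_even e1, wln_odd_le e2 h5] at h4; omega
    · exact Or.inr ⟨e1, by omega, e2, h5⟩
  · -- p.1 odd, p.2 even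
    rcases le_or_gt p.1 (2 * l + 1) with h5 | h5
    · exact Or.inl ⟨e1, h5, e2⟩
    · rw [wln_odd_gt e1 h5, wln_even e2] at h4; omega
  · -- both odd
    rcases le_or_gt p.1 (2 * l + 1) with h5 | h5 <;> rcases le_or_gt p.2 (2 * l + 1) with h6 | h6
    · rw [wln_odd_le e1 h5, wln_odd_le e2 h6] at h4; omega
    · rw [wln_odd_le e1 h5, wln_odd_gt e2 h6] at h4; omega
    · rw [wln_odd_gt e1 h5, wln_odd_le e2 h6] at h4; omega
    · rw [wln_odd_gt e1 h5, wln_odd_gt e2 h6] at h4; omega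

def Opos (l : ℕ) : Finset ℕ := (Finset.range (l + 1)).image (fun t => 2 * t + 1)
def Epos (l n : ℕ) : Finset ℕ := (Finset.range (l + n)).image (fun t => 2 * t + 2)

lemma mem_Opos {l k : ℕ} : k ∈ Opos l ↔ k % 2 = 1 ∧ k ≤ 2 * l + 1 := by
  simp only [Opos, Finset.mem_image, Finset.mem_range]
  constructor
  · rintro ⟨t, ht, rfl⟩; omega
  · rintro ⟨h1, h2⟩; exact ⟨k / 2, by omega, by omega⟩

lemma mem_Epos {l n k : ℕ} : k ∈ Epos l n ↔ k % 2 = 0 ∧ 2 ≤ k ∧ k ≤ 2 * l + 2 * n := by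
  simp only [Epos, Finset.mem_image, Finset.mem_range]
  constructor
  · rintro ⟨t, ht, rfl⟩; omega
  · rintro ⟨h1, h2, h3⟩; exact ⟨(k - 2) / 2, by omega, by omega⟩

lemma card_Opos (l : ℕ) : (Opos l).card = l + 1 := by
  rw [Opos, Finset.card_image_of_injective _ (fun a b => by omega), Finset.card_range]

lemma card_Epos (l n : ℕ) : (Epos l n).card = l + n := by
  rw [Epos, Finset.card_image_of_injective _ (fun a b => by omega), Finset.card_range]

lemma arcs_share {l n : ℕ} {C : Finset (ℕ × ℕ)}
    (hC : IsArcConfigOn (2 * l + 2 * n + 2) (wln l) C) {p q : ℕ × ℕ}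
    (hp : p ∈ C) (hq : q ∈ C)
    (hk : p.1 = q.1 ∨ p.1 = q.2 ∨ p.2 = q.1 ∨ p.2 = q.2) : p = q := by
  obtain ⟨a1, a2, a3, -⟩ := hC.1 p hp
  obtain ⟨b1, b2, b3, -⟩ := hC.1 q hq
  rcases hk with e | e | e | e
  · obtain ⟨r, -, hu⟩ := hC.2 q.1 b1 (by omega)
    exact (hu p ⟨hp, Or.inl e⟩).trans (hu q ⟨hq, Or.inl rfl⟩).symm
  · obtain ⟨r, -, hu⟩ := hC.2 q.2 (by omega) b3
    exact (hu p ⟨hp, Or.inl e⟩).trans (hu q ⟨hq, Or.inr rfl⟩).symm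
  · obtain ⟨r, -, hu⟩ := hC.2 q.1 b1 (by omega)
    exact (hu p ⟨hp, Or.inr e⟩).trans (hu q ⟨hq, Or.inl rfl⟩).symm
  · obtain ⟨r, -, hu⟩ := hC.2 q.2 (by omega) b3
    exact (hu p ⟨hp, Or.inr e⟩).trans (hu q ⟨hq, Or.inr rfl⟩).symm

lemma forward {l n : ℕ} {C : Finset (ℕ × ℕ)}
    (h1 : IsArcConfigOn (2 * l + 2 * n + 2) (wln l) C)
    (h2 : ∀ p ∈ C, ∀ q ∈ C, ¬ Crossing p q) :
    NCM (Finset.Icc 1 (2 * l + 2 * n + 2))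
      (Opos l ∪ (C.image Prod.fst).filter (fun x => x % 2 = 0)) C ∧
    (C.image Prod.fst).filter (fun x => x % 2 = 0) ∈ (Epos l n).powersetCard n := by
  set m := 2 * l + 2 * n + 2 with hm
  set S := (C.image Prod.fst).filter (fun x => x % 2 = 0) with hS
  set F := Opos l ∪ S with hF
  have himg : C.image Prod.fst = F := by
    apply Finset.Subset.antisymm
    · intro k hk
      obtain ⟨p, hp, rfl⟩ := Finset.mem_image.1 hk
      rcases arc_dichotomy h1 hp with ⟨e1, e2, -⟩ | ⟨e1, -, -⟩
      · exact Finset.mem_union_left _ (mem_Opos.2 ⟨e1, e2⟩)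
      · exact Finset.mem_union_right _ (Finset.mem_filter.2 ⟨hk, e1⟩)
    · intro k hk
      rcases Finset.mem_union.1 hk with hk | hk
      · obtain ⟨e1, e2⟩ := mem_Opos.1 hk
        obtain ⟨p, ⟨hp, hpk⟩, -⟩ := h1.2 k (by omega) (by omega)
        rcases hpk with e | e
        · exact Finset.mem_image.2 ⟨p, hp, e⟩
        · exfalso
          rcases arc_dichotomy h1 hp with ⟨-, -, e3⟩ | ⟨-, -, -, e3⟩ <;> omega
      · exact (Finset.mem_filter.1 hk).1
  have harcmem : ∀ p ∈ C, p.1 ∈ F ∧ p.2 ∈ Finset.Icc 1 m ∧ p.2 ∉ F ∧ p.1 < p.2 := by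
    intro p hp
    obtain ⟨a1, a2, a3, -⟩ := h1.1 p hp
    refine ⟨himg ▸ Finset.mem_image.2 ⟨p, hp, rfl⟩, Finset.mem_Icc.2 ⟨by omega, a3⟩, ?_, a2⟩
    rw [← himg]
    intro hmem
    obtain ⟨q, hq, hq1⟩ := Finset.mem_image.1 hmem
    have heq := arcs_share h1 hp hq (by omega)
    rw [← heq] at hq1
    omega
  have hncm : NCM (Finset.Icc 1 m) F C := by
    refine ⟨harcmem, ?_, h2⟩
    intro k hk
    obtain ⟨e1, e2⟩ := Finset.mem_Icc.1 hk
    exact h1.2 k e1 e2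
  have hFP : F ⊆ Finset.Icc 1 m := by
    intro x hx
    rcases Finset.mem_union.1 hx with hx | hx
    · obtain ⟨e1, e2⟩ := mem_Opos.1 hx
      exact Finset.mem_Icc.2 ⟨by omega, by omega⟩
    · obtain ⟨hx, -⟩ := Finset.mem_filter.1 hx
      obtain ⟨p, hp, rfl⟩ := Finset.mem_image.1 hx
      obtain ⟨a1, a2, a3, -⟩ := h1.1 p hp
      exact Finset.mem_Icc.2 ⟨a1, by omega⟩
  refine ⟨hncm, Finset.mem_powersetCard.2 ⟨?_, ?_⟩⟩
  · -- S ⊆ Epos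
    intro k hk
    obtain ⟨hk1, hk2⟩ := Finset.mem_filter.1 hk
    obtain ⟨p, hp, rfl⟩ := Finset.mem_image.1 hk1
    obtain ⟨a1, a2, a3, -⟩ := h1.1 p hp
    rcases arc_dichotomy h1 hp with ⟨e1, -, -⟩ | ⟨e1, e2, e3, -⟩
    · omega
    · exact mem_Epos.2 ⟨e1, by omega, e2⟩
  · -- S.card = n
    have hinj : Set.InjOn Prod.fst (C : Set (ℕ × ℕ)) := by
      intro p hp q hq e
      exact arcs_share h1 hp hq (Or.inl e)
    have himgcard : (C.image Prod.fst).card = C.card := Finset.card_image_of_injOn hinj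
    have hPcard : (Finset.Icc 1 m).card = m := by rw [Nat.card_Icc]; omega
    have hCcard := ncm_card hncm hFP
    have hdisj : Disjoint (Opos l) S := by
      rw [Finset.disjoint_left]
      intro a ha ha'
      have := (mem_Opos.1 ha).1
      have := (Finset.mem_filter.1 ha').2
      omega
    have : F.card = (Opos l).card + S.card := by
      rw [hF, Finset.card_union_of_disjoint hdisj]
    rw [himg] at himgcard
    have := card_Opos l
    omega

lemma filter_card_P {l n k : ℕ} :
    ((Finset.Icc 1 (2 * l + 2 * n + 2)).filter (· < k)).card
      = min k (2 * l + 2 * n + 3) - 1 := by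
  have : (Finset.Icc 1 (2 * l + 2 * n + 2)).filter (· < k)
      = Finset.Ico 1 (min k (2 * l + 2 * n + 3)) := by
    ext x
    simp only [Finset.mem_filter, Finset.mem_Icc, Finset.mem_Ico]
    omega
  rw [this, Nat.card_Ico]

lemma filter_card_O {l k : ℕ} :
    ((Opos l).filter (· < k)).card = min (l + 1) (k / 2) := by
  rw [Opos, Finset.filter_image]
  rw [Finset.card_image_of_injective _ (fun a b => by omega)]
  have : (Finset.range (l + 1)).filter (fun t => 2 * t + 1 < k)
      = Finset.range (min (l + 1) (k / 2)) := by
    ext t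
    simp only [Finset.mem_filter, Finset.mem_range]
    omega
  rw [this, Finset.card_range]

lemma filter_card_E {l n k : ℕ} :
    ((Epos l n).filter (· < k)).card = min (l + n) ((k - 1) / 2) := by
  rw [Epos, Finset.filter_image]
  rw [Finset.card_image_of_injective _ (fun a b => by omega)]
  have : (Finset.range (l + n)).filter (fun t => 2 * t + 2 < k)
      = Finset.range (min (l + n) ((k - 1) / 2)) := by
    ext t
    simp only [Finset.mem_filter, Finset.mem_range]
    omega
  rw [this, Finset.card_range]

lemma backward {l n : ℕ} {S : Finset ℕ} (hS : S ∈ (Epos l n).powersetCard n) :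
    ∃ C, NCM (Finset.Icc 1 (2 * l + 2 * n + 2)) (Opos l ∪ S) C := by
  obtain ⟨hSE, hScard⟩ := Finset.mem_powersetCard.1 hS
  have hSodd : ∀ x ∈ S, x % 2 = 0 := fun x hx => (mem_Epos.1 (hSE hx)).1
  have hdisj : Disjoint (Opos l) S := by
    rw [Finset.disjoint_left]
    intro a ha ha'
    have := (mem_Opos.1 ha).1
    have := hSodd a ha'
    omega
  have hFP : Opos l ∪ S ⊆ Finset.Icc 1 (2 * l + 2 * n + 2) := by
    intro x hx
    rcases Finset.mem_union.1 hx with hx | hx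
    · obtain ⟨e1, e2⟩ := mem_Opos.1 hx
      exact Finset.mem_Icc.2 ⟨by omega, by omega⟩
    · obtain ⟨e1, e2, e3⟩ := mem_Epos.1 (hSE hx)
      exact Finset.mem_Icc.2 ⟨by omega, by omega⟩
  have hPcard : (Finset.Icc 1 (2 * l + 2 * n + 2)).card = 2 * l + 2 * n + 2 := by rw [Nat.card_Icc]; omega
  have hFcard : (Opos l ∪ S).card = l + 1 + n := by
    rw [Finset.card_union_of_disjoint hdisj, card_Opos, hScard]
  have htot : 2 * (Opos l ∪ S).card = (Finset.Icc 1 (2 * l + 2 * n + 2)).card := by omega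
  have hbal : ∀ k, (((Finset.Icc 1 (2 * l + 2 * n + 2)) \ (Opos l ∪ S)).filter (· < k)).card
      ≤ ((Opos l ∪ S).filter (· < k)).card := by
    intro k
    have hPk := filter_card_P (l := l) (n := n) (k := k)
    have hOk := filter_card_O (l := l) (k := k)
    have hEk := filter_card_E (l := l) (n := n) (k := k)
    have hFk : ((Opos l ∪ S).filter (· < k)).card
        = ((Opos l).filter (· < k)).card + (S.filter (· < k)).card := by
      rw [Finset.filter_union, Finset.card_union_of_disjoint
        (Finset.disjoint_filter_filter hdisj)]
    have hsplit : (((Finset.Icc 1 (2 * l + 2 * n + 2)) \ (Opos l ∪ S)).filter (· < k)).card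
        + ((Opos l ∪ S).filter (· < k)).card
        = ((Finset.Icc 1 (2 * l + 2 * n + 2)).filter (· < k)).card := by
      have e1 : ((Finset.Icc 1 (2 * l + 2 * n + 2)) \ (Opos l ∪ S)).filter (· < k)
          = (Finset.Icc 1 (2 * l + 2 * n + 2)).filter (· < k) \ (Opos l ∪ S).filter (· < k) := by
        ext x
        simp only [Finset.mem_filter, Finset.mem_sdiff]
        tauto
      rw [e1, Finset.card_sdiff_add_card_eq_card
        (Finset.filter_subset_filter _ hFP)]
    have hSm : (S.filter (· < k)).card ≤ n := by
      calc (S.filter (· < k)).card ≤ S.card := Finset.card_le_card (Finset.filter_subset _ _)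
        _ = n := hScard
    have hSlow : n + ((Epos l n).filter (· < k)).card ≤ (S.filter (· < k)).card + (l + n) := by
      have e1 := Finset.card_filter_add_card_filter_not (s := S) (p := (· < k))
      have e2 := Finset.card_filter_add_card_filter_not (s := Epos l n) (p := (· < k))
      have e3 : (S.filter (fun x => ¬ x < k)).card ≤ ((Epos l n).filter (fun x => ¬ x < k)).card :=
        Finset.card_le_card (Finset.filter_subset_filter _ hSE)
      have := card_Epos l n
      omega
    have m1 := min_choice k (2 * l + 2 * n + 3)
    have m2 := min_choice (l + 1) (k / 2)
    have m3 := min_choice (l + n) ((k - 1) / 2)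
    have m1a := min_le_left k (2 * l + 2 * n + 3)
    have m1b := min_le_right k (2 * l + 2 * n + 3)
    have m2a := min_le_left (l + 1) (k / 2)
    have m2b := min_le_right (l + 1) (k / 2)
    have m3a := min_le_left (l + n) ((k - 1) / 2)
    have m3b := min_le_right (l + n) ((k - 1) / 2)
    omega
  obtain ⟨C, hC⟩ := ncm_exists (Finset.Icc 1 (2 * l + 2 * n + 2)).card (Finset.Icc 1 (2 * l + 2 * n + 2)) (Opos l ∪ S)
    le_rfl hFP htot hbal
  exact ⟨C, hC⟩

lemma backward_isconfig {l n : ℕ} {S : Finset ℕ} (hS : S ∈ (Epos l n).powersetCard n)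
    {C : Finset (ℕ × ℕ)} (hC : NCM (Finset.Icc 1 (2 * l + 2 * n + 2)) (Opos l ∪ S) C) :
    IsArcConfigOn (2 * l + 2 * n + 2) (wln l) C ∧ ∀ p ∈ C, ∀ q ∈ C, ¬ Crossing p q := by
  obtain ⟨hSE, hScard⟩ := Finset.mem_powersetCard.1 hS
  set m := 2 * l + 2 * n + 2 with hm
  have hFP : Opos l ∪ S ⊆ Finset.Icc 1 m := by
    intro x hx
    rcases Finset.mem_union.1 hx with hx | hx
    · obtain ⟨e1, e2⟩ := mem_Opos.1 hx
      exact Finset.mem_Icc.2 ⟨by omega, by omega⟩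
    · obtain ⟨e1, e2, e3⟩ := mem_Epos.1 (hSE hx)
      exact Finset.mem_Icc.2 ⟨by omega, by omega⟩
  refine ⟨⟨?_, ?_⟩, hC.2.2⟩
  · intro p hp
    obtain ⟨a1, a2, a3, a4⟩ := hC.1 p hp
    have hp1 : p.1 ∈ Finset.Icc 1 m := hFP a1
    have hparity := ncm_parity hC hFP hp
    obtain ⟨b1, b2⟩ := Finset.mem_Icc.1 hp1
    obtain ⟨c1, c2⟩ := Finset.mem_Icc.1 a2
    refine ⟨b1, a4, c2, ?_⟩
    rcases Finset.mem_union.1 a1 with hx | hx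
    · -- p.1 is a zero
      obtain ⟨e1, e2⟩ := mem_Opos.1 hx
      have e3 : p.2 % 2 = 0 := by omega
      rw [wln_odd_le e1 e2, wln_even e3]; norm_num
    · -- p.1 ∈ S : a two, p.2 is a four
      have e1 : p.1 % 2 = 0 := (mem_Epos.1 (hSE hx)).1
      have e2 : p.2 % 2 = 1 := by omega
      have e4 : 2 * l + 1 < p.2 := by
        by_contra h
        exact a3 (Finset.mem_union_left _ (mem_Opos.2 ⟨e2, by omega⟩))
      rw [wln_even e1, wln_odd_gt e2 e4]; norm_num
  · intro k hk1 hk2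
    exact hC.2.1 k (Finset.mem_Icc.2 ⟨hk1, hk2⟩)


lemma union_sub {l n : ℕ} {S : Finset ℕ} (hS : S ∈ (Epos l n).powersetCard n) :
    Opos l ∪ S ⊆ Finset.Icc 1 (2 * l + 2 * n + 2) := by
  intro x hx
  rcases Finset.mem_union.1 hx with hx | hx
  · obtain ⟨e1, e2⟩ := mem_Opos.1 hx
    exact Finset.mem_Icc.2 ⟨by omega, by omega⟩
  · obtain ⟨e1, e2, e3⟩ := mem_Epos.1 ((Finset.mem_powersetCard.1 hS).1 hx)
    exact Finset.mem_Icc.2 ⟨by omega, by omega⟩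

/-- The number of noncrossing arc configurations of the word `(02)^l 0 (24)^n 2` equals
`binom(n + l, n)`. -/
theorem card_noncrossing_configs_wln (l n : ℕ) :
    Nat.card {C : Finset (ℕ × ℕ) //
        IsArcConfigOn (2 * l + 2 * n + 2) (wln l) C ∧ ∀ p ∈ C, ∀ q ∈ C, ¬ Crossing p q}
      = (n + l).choose n := by
  have key : Nat.card {C : Finset (ℕ × ℕ) //
        IsArcConfigOn (2 * l + 2 * n + 2) (wln l) C ∧ ∀ p ∈ C, ∀ q ∈ C, ¬ Crossing p q}
      = Nat.card {S : Finset ℕ // S ∈ (Epos l n).powersetCard n} := by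
    apply Nat.card_congr
    refine Equiv.ofBijective
      (fun C => ⟨(C.1.image Prod.fst).filter (fun x => x % 2 = 0),
        (forward C.2.1 C.2.2).2⟩) ⟨?_, ?_⟩
    · rintro ⟨C₁, h₁⟩ ⟨C₂, h₂⟩ he
      have hSeq : (C₁.image Prod.fst).filter (fun x => x % 2 = 0)
          = (C₂.image Prod.fst).filter (fun x => x % 2 = 0) := congrArg Subtype.val he
      have n₁ := (forward h₁.1 h₁.2).1
      have n₂ := (forward h₂.1 h₂.2).1
      rw [hSeq] at n₁
      exact Subtype.ext (ncm_unique (Finset.Icc 1 (2 * l + 2 * n + 2)).card _ _ _ _ le_rfl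
        (union_sub (forward h₂.1 h₂.2).2) n₁ n₂)
    · rintro ⟨S, hS⟩
      obtain ⟨C, hC⟩ := backward hS
      refine ⟨⟨C, backward_isconfig hS hC⟩, Subtype.ext ?_⟩
      show (C.image Prod.fst).filter (fun x => x % 2 = 0) = S
      rw [ncm_image_fst hC (union_sub hS)]
      ext x
      simp only [Finset.mem_filter, Finset.mem_union, mem_Opos]
      constructor
      · rintro ⟨h1 | h1, h2⟩
        · omega
        · exact h1
      · intro hx
        exact ⟨Or.inr hx, (mem_Epos.1 ((Finset.mem_powersetCard.1 hS).1 hx)).1⟩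
  rw [key]
  rw [Nat.card_eq_fintype_card]
  rw [Fintype.card_coe]
  rw [Finset.card_powersetCard, card_Epos, Nat.add_comm l n]
end

section
/- For every n ≥ 1, twice the number of finite sequences (α_1, ..., α_r) of positive integers with α_1 + ... + α_r = n for which there exists m with α_1 ≤ ... ≤ α_m > α_{m+1} > ... > α_r equals the number of pairs (λ, μ) where λ is a partition, μ is a partition into distinct parts, and |λ| + |μ| = n (i.e. equals the number of overpartitions of n). -/
/-!
Cutting a list `α` after its first `k` entries into a weakly increasing prefix and a strictly
decreasing suffix is the same as writing `α = λ.reverse ++ μ` with `(λ, μ)` an overpartition.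
A nonempty list admits such a cut iff it is peak-shaped, and then it admits exactly two, just
before and just after the peak: two cuts `j + 1 < k` are impossible, since the entries `α[j]`,
`α[j+1]` would have to both rise and fall.
-/

open List

/-- A list `α = (α_1, ..., α_r)` is peak-shaped if there exists `m` with `1 ≤ m ≤ r` such that
`α_1 ≤ ... ≤ α_m > α_{m+1} > ... > α_r`. -/
def PeakShaped (α : List ℕ) : Prop :=
  ∃ m, 1 ≤ m ∧ m ≤ α.length ∧
    List.Pairwise (· ≤ ·) (α.take m) ∧ List.Pairwise (· > ·) (α.drop (m - 1))

def IsUpDownSplit {β : Type*} [Preorder β] (l : List β) (k : ℕ) : Prop :=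
  k ≤ l.length ∧ (l.take k).Pairwise (· ≤ ·) ∧ (l.drop k).Pairwise (· > ·)

section UpDownSplit

variable {β : Type*}

theorem IsUpDownSplit.eq_add_one_of_lt [Preorder β] {l : List β} {j k : ℕ}
    (hj : IsUpDownSplit l j) (hk : IsUpDownSplit l k) (hjk : j < k) : k = j + 1 := by
  by_contra hne
  have hlen : j + 1 < l.length := by have := hk.1; omega
  have hle : l[j] ≤ l[j + 1] := by
    have := pairwise_iff_getElem.1 hk.2.1 j (j + 1) (by simp; omega) (by simp; omega) (by omega)
    simpa only [getElem_take] using this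
  have hgt : l[j] > l[j + 1] := by
    have := pairwise_iff_getElem.1 hj.2.2 0 1 (by simp; omega) (by simp; omega) one_pos
    simpa only [getElem_drop, Nat.add_zero, Nat.add_comm j 1] using this
  exact lt_irrefl _ (hle.trans_lt hgt)

theorem isUpDownSplit_reverse_append [Preorder β] {lam mu : List β}
    (hlam : lam.Pairwise (· ≥ ·)) (hmu : mu.Pairwise (· > ·)) :
    IsUpDownSplit (lam.reverse ++ mu) lam.length := by
  refine ⟨by simp, ?_, ?_⟩
  · rw [take_left' length_reverse, pairwise_reverse]
    exact hlam
  · rwa [drop_left' length_reverse]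

theorem exists_adjacent_isUpDownSplit_reverse_append [LinearOrder β] {lam mu : List β}
    (hlam : lam.Pairwise (· ≥ ·)) (hmu : mu.Pairwise (· > ·)) (hne : lam.reverse ++ mu ≠ []) :
    ∃ m, 1 ≤ m ∧ IsUpDownSplit (lam.reverse ++ mu) (m - 1) ∧
      IsUpDownSplit (lam.reverse ++ mu) m := by
  have hsplit := isUpDownSplit_reverse_append hlam hmu
  obtain ⟨a, lam', rfl, ha⟩ | ⟨c, mu', rfl, hc⟩ :
      (∃ a lam', lam = a :: lam' ∧ ∀ c ∈ mu, c < a) ∨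
        ∃ c mu', mu = c :: mu' ∧ ∀ a ∈ lam, a ≤ c := by
    rcases lam with _ | ⟨a, lam'⟩ <;> rcases mu with _ | ⟨c, mu'⟩
    · simp at hne
    · exact .inr ⟨c, mu', rfl, by simp⟩
    · exact .inl ⟨a, lam', rfl, by simp⟩
    · rcases lt_or_ge c a with hca | hac
      · exact .inl ⟨a, lam', rfl, fun x hx => ((hmu.imp le_of_lt).rel_head hx).trans_lt hca⟩
      · exact .inr ⟨c, mu', rfl, fun x hx => (hlam.rel_head hx).trans hac⟩
  -- the peak is the head of `lam`, which may equally well be moved to the front of `mu`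
  · refine ⟨(a :: lam').length, by simp, ?_, hsplit⟩
    simpa using isUpDownSplit_reverse_append (pairwise_cons.1 hlam).2 (pairwise_cons.2 ⟨ha, hmu⟩)
  -- the peak is the head of `mu`, which may equally well be moved to the front of `lam`
  · refine ⟨lam.length + 1, by simp, by simpa using hsplit, ?_⟩
    simpa using isUpDownSplit_reverse_append (pairwise_cons.2 ⟨hc, hlam⟩) (pairwise_cons.1 hmu).2

end UpDownSplit

theorem peakShaped_iff {α : List ℕ} :
    PeakShaped α ↔ ∃ m, 1 ≤ m ∧ IsUpDownSplit α (m - 1) ∧ IsUpDownSplit α m := by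
  constructor
  · rintro ⟨m, hm, hml, hup, hdown⟩
    exact ⟨m, hm, ⟨by omega, hup.sublist (take_sublist_take_left (by omega)), hdown⟩,
      ⟨hml, hup, hdown.sublist (drop_sublist_drop_left _ (by omega))⟩⟩
  · rintro ⟨m, hm, ⟨-, -, hdown⟩, ⟨hml, hup, -⟩⟩
    exact ⟨m, hm, hml, hup, hdown⟩

theorem PeakShaped.card_isUpDownSplit {α : List ℕ} (h : PeakShaped α) :
    Nat.card {k // IsUpDownSplit α k} = 2 := by
  obtain ⟨m, hm, hprev, hpeak⟩ := peakShaped_iff.1 h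
  refine Nat.card_eq_two_iff.2 ⟨⟨m - 1, hprev⟩, ⟨m, hpeak⟩, by simp; omega, ?_⟩
  refine Set.eq_univ_of_forall fun ⟨k, hk⟩ => ?_
  have : k = m - 1 ∨ k = m := by
    rcases lt_trichotomy k (m - 1) with hlt | heq | hgt
    · have hprev_eq := hk.eq_add_one_of_lt hprev hlt
      have hpeak_eq := hk.eq_add_one_of_lt hpeak (by omega)
      omega
    · exact .inl heq
    · have := hprev.eq_add_one_of_lt hk hgt
      omega
  rcases this with rfl | rfl <;> simp

abbrev PeakComposition (n : ℕ) : Type :=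
  {α : List ℕ // (∀ x ∈ α, 0 < x) ∧ α.sum = n ∧ PeakShaped α}

abbrev Overpartition (n : ℕ) : Type :=
  {p : List ℕ × List ℕ // (∀ x ∈ p.1, 0 < x) ∧ (∀ x ∈ p.2, 0 < x) ∧
    List.Pairwise (· ≥ ·) p.1 ∧ List.Pairwise (· > ·) p.2 ∧ p.1.sum + p.2.sum = n}

def overpartitionEquivSigma (n : ℕ) (hn : 1 ≤ n) :
    Overpartition n ≃ Σ α : PeakComposition n, {k // IsUpDownSplit α.1 k} where
  toFun p :=
    ⟨⟨p.1.1.reverse ++ p.1.2,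
        by simpa [or_imp, forall_and] using ⟨p.2.1, p.2.2.1⟩,
        by rw [sum_append, sum_reverse, p.2.2.2.2.2],
        peakShaped_iff.2 <|
          exists_adjacent_isUpDownSplit_reverse_append p.2.2.2.1 p.2.2.2.2.1 <| by
            intro h
            have hsum := p.2.2.2.2.2
            rw [← sum_reverse, ← sum_append, h, sum_nil] at hsum
            omega⟩,
      ⟨p.1.1.length, isUpDownSplit_reverse_append p.2.2.2.1 p.2.2.2.2.1⟩⟩
  invFun x :=
    ⟨((x.1.1.take x.2).reverse, x.1.1.drop x.2),
      fun y hy => x.1.2.1 y (mem_of_mem_take (mem_reverse.1 hy)),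
      fun y hy => x.1.2.1 y (mem_of_mem_drop hy),
      pairwise_reverse.2 x.2.2.2.1, x.2.2.2.2,
      by rw [sum_reverse, sum_take_add_sum_drop, x.1.2.2.1]⟩
  left_inv p := by ext <;> simp
  right_inv x := by
    refine Sigma.subtype_ext (Subtype.ext ?_) ?_
    · simp
    · simpa using x.2.2.1

/-- Twice the number of peak-shaped compositions of `n` equals the number of overpartitions
of `n`, i.e. of pairs `(λ, μ)` with `λ` a partition, `μ` a partition into distinct parts, and
`|λ| + |μ| = n`. -/
theorem two_mul_card_peak_eq_card_overpartitions (n : ℕ) (hn : 1 ≤ n) :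
    2 * Nat.card {α : List ℕ // (∀ x ∈ α, 0 < x) ∧ α.sum = n ∧ PeakShaped α}
      = Nat.card {p : List ℕ × List ℕ //
          (∀ x ∈ p.1, 0 < x) ∧ (∀ x ∈ p.2, 0 < x) ∧
          List.Pairwise (· ≥ ·) p.1 ∧ List.Pairwise (· > ·) p.2 ∧
          p.1.sum + p.2.sum = n} := by
  have hfiber (α : PeakComposition n) : Nonempty ({k // IsUpDownSplit α.1 k} ≃ Bool) := by
    have hcard := α.2.2.2.card_isUpDownSplit
    have : Finite {k // IsUpDownSplit α.1 k} := Nat.finite_of_card_ne_zero (by omega)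
    exact Finite.card_eq.1 (by simpa using hcard)
  calc 2 * Nat.card (PeakComposition n)
      = Nat.card (Σ _ : PeakComposition n, Bool) := by
        rw [Nat.card_congr (Equiv.sigmaEquivProd _ _), Nat.card_prod,
          Nat.card_eq_fintype_card (α := Bool), Fintype.card_bool, mul_comm]
    _ = Nat.card (Σ α : PeakComposition n, {k // IsUpDownSplit α.1 k}) :=
        Nat.card_congr (Equiv.sigmaCongrRight fun α => (hfiber α).some.symm)
    _ = Nat.card (Overpartition n) := (Nat.card_congr (overpartitionEquivSigma n hn)).symm
end

section
/- Let V be a module over a ring such that V/Soc(V) is a simple module, where Soc(V) is the sum of all simple submodules of V. If W ⊆ V is a submodule that is not semisimple, then there exists a semisimple submodule M ⊆ Soc(V) such that V = W ⊕ M (internal direct sum). -/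
/-- The socle of a module: the sum of all its simple submodules. -/
noncomputable def moduleSocle (R : Type*) (M : Type*) [Ring R] [AddCommGroup M]
    [Module R M] : Submodule R M :=
  sSup {m : Submodule R M | IsSimpleModule R ↥m}

lemma moduleSocle_isSemisimple (R : Type*) (M : Type*) [Ring R] [AddCommGroup M]
    [Module R M] : IsSemisimpleModule R ↥(moduleSocle R M) := by
  rw [moduleSocle, sSup_eq_iSup]
  exact isSemisimpleModule_biSup_of_isSemisimpleModule_submodule
    (fun m hm ↦ by haveI : IsSimpleModule R ↥m := hm; infer_instance)

lemma isSemisimple_of_le {R : Type*} [Ring R] {M : Type*} [AddCommGroup M] [Module R M]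
    {p q : Submodule R M} (h : p ≤ q) (hq : IsSemisimpleModule R ↥q) :
    IsSemisimpleModule R ↥p := by
  have h' : p ≤ LinearMap.range q.subtype := by simpa [Submodule.range_subtype] using h
  have e : (p.comap q.subtype) ≃ₗ[R] p :=
    p.comap_equiv_self_of_inj_of_le q.injective_subtype h'
  exact IsSemisimpleModule.congr e.symm

/-- If `V / Soc(V)` is simple and `W ⊆ V` is a non-semisimple submodule, then `V = W ⊕ M`
for some semisimple submodule `M ⊆ Soc(V)`. -/
theorem exists_semisimple_complement {R : Type*} [Ring R] {V : Type*} [AddCommGroup V]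
    [Module R V] (hsoc : IsSimpleModule R (V ⧸ moduleSocle R V))
    (W : Submodule R V) (hW : ¬ IsSemisimpleModule R ↥W) :
    ∃ M : Submodule R V, M ≤ moduleSocle R V ∧ IsSemisimpleModule R ↥M ∧
      W ⊓ M = ⊥ ∧ W ⊔ M = ⊤ := by
  set S := moduleSocle R V with hS
  have hSsemi : IsSemisimpleModule R ↥S := moduleSocle_isSemisimple R V
  -- W is not contained in S
  have hWS : ¬ W ≤ S := fun h ↦ hW (isSemisimple_of_le h hSsemi)
  -- W ⊔ S = ⊤
  have hsup : S ⊔ W = ⊤ := by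
    rcases eq_bot_or_eq_top (W.map S.mkQ) with h | h
    · exact absurd (fun x hx ↦ by
        simpa [Submodule.Quotient.mk_eq_zero] using
          (Submodule.eq_bot_iff _).mp h (S.mkQ x) ⟨x, hx, rfl⟩) hWS
    · exact (Submodule.map_mkQ_eq_top S W).mp h
  -- complement of W ⊓ S inside S
  obtain ⟨M', hM'⟩ := exists_isCompl ((W ⊓ S).comap S.subtype)
  refine ⟨M'.map S.subtype, ?_, ?_, ?_, ?_⟩
  · simpa [Submodule.range_subtype] using Submodule.map_subtype_le S M'
  · exact isSemisimple_of_le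
      (by simpa [Submodule.range_subtype] using Submodule.map_subtype_le S M')
      hSsemi
  · have key : ((W ⊓ S).comap S.subtype).map S.subtype = W ⊓ S := by
      rw [Submodule.map_comap_eq, Submodule.range_subtype, inf_eq_right.mpr inf_le_right]
    have h1 : (W ⊓ S) ⊓ M'.map S.subtype = ⊥ := by
      have : ((W ⊓ S).comap S.subtype).map S.subtype ⊓ M'.map S.subtype = ⊥ := by
        rw [← Submodule.map_inf _ S.injective_subtype, hM'.inf_eq_bot, Submodule.map_bot]
      rwa [key] at this
    have hle : M'.map S.subtype ≤ S := by
      simpa [Submodule.range_subtype] using Submodule.map_subtype_le S M'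
    rw [← h1, inf_assoc, inf_eq_right.mpr hle]
  · have key : ((W ⊓ S).comap S.subtype).map S.subtype = W ⊓ S := by
      rw [Submodule.map_comap_eq, Submodule.range_subtype, inf_eq_right.mpr inf_le_right]
    have h2 : (W ⊓ S) ⊔ M'.map S.subtype = S := by
      have : ((W ⊓ S).comap S.subtype).map S.subtype ⊔ M'.map S.subtype = S := by
        rw [← Submodule.map_sup, hM'.sup_eq_top, Submodule.map_top, Submodule.range_subtype]
      rwa [key] at this
    calc W ⊔ M'.map S.subtype = W ⊔ ((W ⊓ S) ⊔ M'.map S.subtype) := by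
          rw [← sup_assoc, sup_inf_self]
      _ = W ⊔ S := by rw [h2]
      _ = ⊤ := by rw [sup_comm, hsup]
end

section
/- Let V be an indecomposable module over a ring such that V/Soc(V) is simple. Then every proper submodule of V is contained in Soc(V). Moreover, if M ⊊ V is a proper submodule such that V/M is semisimple, then M = Soc(V). -/
/-!
In the lattice of submodules, `Soc(V)` is a coatom below which the lattice is complemented.
If `W ⊄ Soc(V)`, then `W ⊔ Soc(V) = V`, and a complement of `W ⊓ Soc(V)` inside `Soc(V)` is a
complement of `W` in `V`; indecomposability then forces `W = 0` or `W = V`. For the second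
claim, a complement `T` of `Soc(V)` above `M` (it exists as `V / M` is semisimple) is either
proper, hence inside `Soc(V)`, which would make `Soc(V) = V`, or all of `V`, and then
`M = Soc(V) ⊓ T = Soc(V)`.
-/

open Set

section Lattice

variable {α : Type*} [Lattice α]

theorem exists_isCompl_of_sup_eq_top [BoundedOrder α] {a s : α} [ComplementedLattice (Iic s)]
    (h : a ⊔ s = ⊤) : ∃ c, IsCompl a c := by
  obtain ⟨c, hcs, hdisj, hsup⟩ :=
    Iic.complementedLattice_iff.mp ‹_› (a ⊓ s) inf_le_right
  refine ⟨c, IsCompl.of_eq ?_ ?_⟩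
  · calc a ⊓ c = a ⊓ s ⊓ c := by rw [inf_assoc, inf_eq_right.mpr hcs]
      _ = ⊥ := hdisj
  · refine top_unique ?_
    calc ⊤ = a ⊔ (a ⊓ s ⊔ c) := by rw [hsup, h]
      _ ≤ a ⊔ c := by rw [← sup_assoc, sup_inf_self]

theorem IsCoatom.le_of_ne_top_of_indecomposable [BoundedOrder α] {s : α} (hs : IsCoatom s)
    [ComplementedLattice (Iic s)]
    (hind : ∀ a b : α, a ⊓ b = ⊥ → a ⊔ b = ⊤ → a = ⊥ ∨ b = ⊥) {a : α} (ha : a ≠ ⊤) :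
    a ≤ s := by
  by_contra hle
  obtain ⟨c, hc⟩ := exists_isCompl_of_sup_eq_top (s := s)
    (sup_comm s a ▸ codisjoint_iff.mp (hs.not_le_iff_codisjoint.mp hle))
  rcases hind a c hc.inf_eq_bot hc.sup_eq_top with rfl | rfl
  · exact hle bot_le
  · exact ha (by simpa using hc.sup_eq_top)

theorem eq_of_forall_ne_top_le [OrderTop α] {m s : α} (hs : s ≠ ⊤)
    (hle : ∀ a, a ≠ ⊤ → a ≤ s) (hm : m ≤ s) [ComplementedLattice (Ici m)] : m = s := by
  obtain ⟨t, ht⟩ := exists_isCompl (⟨s, hm⟩ : Ici m)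
  obtain ⟨hinf, hcod⟩ := Ici.isCompl_iff.mp ht
  by_cases htop : (t : α) = ⊤
  · rw [← hinf, htop, inf_top_eq]
  · exact absurd (codisjoint_iff.mp hcod) (by rwa [sup_eq_left.mpr (hle _ htop)])

end Lattice

theorem isSemisimpleModule_moduleSocle (R M : Type*) [Ring R] [AddCommGroup M] [Module R M] :
    IsSemisimpleModule R (moduleSocle R M) := by
  rw [moduleSocle, sSup_eq_iSup]
  exact isSemisimpleModule_biSup_of_isSemisimpleModule_submodule fun m (_ : IsSimpleModule R m) ↦ inferInstance

theorem proper_submodule_le_socle_general {R : Type*} [Ring R] {V : Type*} [AddCommGroup V]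
    [Module R V]
    (hind : ∀ A B : Submodule R V, A ⊓ B = ⊥ → A ⊔ B = ⊤ → A = ⊥ ∨ B = ⊥)
    (hsoc : IsSimpleModule R (V ⧸ moduleSocle R V)) :
    (∀ W : Submodule R V, W ≠ ⊤ → W ≤ moduleSocle R V) ∧
    (∀ M : Submodule R V, M ≠ ⊤ → IsSemisimpleModule R (V ⧸ M) → M = moduleSocle R V) := by
  have hcoatom : IsCoatom (moduleSocle R V) := isSimpleModule_iff_isCoatom.mp hsoc
  have : ComplementedLattice (Iic (moduleSocle R V)) :=
    (moduleSocle R V).mapIic.complementedLattice_iff.mp (isSemisimpleModule_moduleSocle R V).1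
  have hproper (W : Submodule R V) (hW : W ≠ ⊤) : W ≤ moduleSocle R V :=
    hcoatom.le_of_ne_top_of_indecomposable hind hW
  refine ⟨hproper, fun M hM hquot ↦ ?_⟩
  have : ComplementedLattice (Ici M) :=
    (Submodule.comapMkQRelIso M).complementedLattice_iff.mp hquot.1
  exact eq_of_forall_ne_top_le hcoatom.ne_top hproper (hproper M hM)

/-- If `V` is indecomposable (nonzero and not an internal direct sum of two nonzero
submodules) and `V / Soc(V)` is simple, then every proper submodule of `V` is contained in
`Soc(V)`; moreover every proper submodule `M` with `V / M` semisimple equals `Soc(V)`. -/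
theorem proper_submodule_le_socle {R : Type*} [Ring R] {V : Type*} [AddCommGroup V]
    [Module R V] (hne : (⊥ : Submodule R V) ≠ ⊤)
    (hind : ∀ A B : Submodule R V, A ⊓ B = ⊥ → A ⊔ B = ⊤ → A = ⊥ ∨ B = ⊥)
    (hsoc : IsSimpleModule R (V ⧸ moduleSocle R V)) :
    (∀ W : Submodule R V, W ≠ ⊤ → W ≤ moduleSocle R V) ∧
    (∀ M : Submodule R V, M ≠ ⊤ → IsSemisimpleModule R (V ⧸ M) → M = moduleSocle R V) :=
  proper_submodule_le_socle_general hind hsoc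
end

section
/- Let r ≥ 0 and let α_1 ≥ α_2 ≥ ... ≥ α_r ≥ 0 and β_1 ≥ β_2 ≥ ... ≥ β_r ≥ 0 be nonnegative integers. Suppose the polynomial Σ_{j=1}^r s^{α_j} - Σ_{j=1}^r s^{β_j} (in ℤ[s]) equals (s - 1)·g(s) for some polynomial g with nonnegative integer coefficients. Then α_j ≥ β_j for all j = 1, ..., r. -/
open Polynomial

/-- If `α_0 ≥ ... ≥ α_{r-1}` and `β_0 ≥ ... ≥ β_{r-1}` are nonnegative integers and
`Σ s^{α_j} - Σ s^{β_j} = (s - 1) g(s)` with `g` having nonnegative coefficients, then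
`α_j ≥ β_j` for all `j`. -/
theorem exponents_dominate (r : ℕ) (α β : ℕ → ℕ)
    (hα : ∀ i j, i ≤ j → j < r → α j ≤ α i)
    (hβ : ∀ i j, i ≤ j → j < r → β j ≤ β i)
    (g : Polynomial ℤ) (hg : ∀ k, 0 ≤ g.coeff k)
    (h : (∑ j ∈ Finset.range r, (X : Polynomial ℤ) ^ α j)
          - ∑ j ∈ Finset.range r, (X : Polynomial ℤ) ^ β j = (X - 1) * g) :
    ∀ j < r, β j ≤ α j := by
  have key : ∀ N : ℕ,
      ((Finset.range r).filter (fun i => α i < N)).card ≤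
      ((Finset.range r).filter (fun i => β i < N)).card := by
    intro N
    match N with
    | 0 => simp
    | (m+1) =>
      have count : ∀ γ : ℕ → ℕ, ∑ k ∈ Finset.range (m+1),
          (∑ j ∈ Finset.range r, (X : Polynomial ℤ) ^ γ j).coeff k
          = (((Finset.range r).filter fun i => γ i < m+1)).card := by
        intro γ
        simp only [Polynomial.finset_sum_coeff, Polynomial.coeff_X_pow]
        rw [Finset.sum_comm, Finset.card_filter]
        push_cast
        refine Finset.sum_congr rfl fun j _ => ?_
        rw [Finset.sum_ite_eq']
        simp [Finset.mem_range]
      have hXg : ∑ k ∈ Finset.range (m+1), ((X : Polynomial ℤ) * g).coeff k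
          = ∑ k ∈ Finset.range m, g.coeff k := by
        rw [Finset.sum_range_succ']
        simp [Polynomial.coeff_X_mul]
      have hcong := congrArg (fun p : Polynomial ℤ => ∑ k ∈ Finset.range (m+1), p.coeff k) h
      simp only [sub_mul, one_mul, Polynomial.coeff_sub, Finset.sum_sub_distrib] at hcong
      rw [count α, count β, hXg, Finset.sum_range_succ] at hcong
      have hgm := hg m
      have : ((((Finset.range r).filter fun i => α i < m+1)).card : ℤ) ≤
          (((Finset.range r).filter fun i => β i < m+1)).card := by linarith
      exact_mod_cast this
  intro j hj
  by_contra hlt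
  push_neg at hlt
  set N := α j + 1 with hN
  have h1 : r - j ≤ ((Finset.range r).filter (fun i => α i < N)).card := by
    have hsub : Finset.Ico j r ⊆ (Finset.range r).filter (fun i => α i < N) := by
      intro i hi
      simp only [Finset.mem_Ico] at hi
      simp only [Finset.mem_filter, Finset.mem_range]
      exact ⟨hi.2, Nat.lt_succ_of_le (hα j i hi.1 hi.2)⟩
    calc r - j = (Finset.Ico j r).card := (Nat.card_Ico j r).symm
      _ ≤ _ := Finset.card_le_card hsub
  have h2 : ((Finset.range r).filter (fun i => β i < N)).card ≤ r - j - 1 := by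
    have hsub : (Finset.range r).filter (fun i => β i < N) ⊆ Finset.Ico (j+1) r := by
      intro i hi
      simp only [Finset.mem_filter, Finset.mem_range] at hi
      rw [Finset.mem_Ico]
      refine ⟨?_, hi.1⟩
      by_contra hij
      push_neg at hij
      have := hβ i j (Nat.lt_succ_iff.mp hij) hj
      omega
    calc _ ≤ (Finset.Ico (j+1) r).card := Finset.card_le_card hsub
      _ = r - (j+1) := Nat.card_Ico _ _
      _ = r - j - 1 := by omega
  have := key N
  omega
end
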